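/- arXiv:1003.1423 — 10 statements merged into one kernel-verified Lean document; each statement's English description precedes it below -/
import Mathlib

section
/- The expected cost C_exp is (totally) differentiable at every point (X,Y) with Y > 0, and its partial derivatives are given by differentiation under the integral sign: ∂C_exp/∂X (X,Y) = a·b·∫₀^W (X−x)·φ(x)/√(b(X−x)² + Y²) dx and ∂C_exp/∂Y (X,Y) = a·Y·∫₀^W φ(x)/√(b(X−x)² + Y²) dx − c. -/
/-!
The integrand `√(b (X - x)² + Y²) φ(x)` is smooth in `(X, Y)` away from `Y = 0`, and its gradient
is bounded by `(√b + 1) |φ x|` uniformly in `(X, Y)`, so dominated convergence allows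
differentiating under the integral sign. The linear part `- c Y φ(x)` integrates to `- c Y`.
-/

open Real MeasureTheory Filter

theorem hasFDerivAt_intervalIntegral_mul_of_norm_fderiv_le
    {H : Type*} [NormedAddCommGroup H] [NormedSpace ℝ H] {μ : Measure ℝ}
    {f : H → ℝ → ℝ} {f' : H → ℝ → H →L[ℝ] ℝ} {φ : ℝ → ℝ} {u v K : ℝ} {q : H} {s : Set H}
    (hφ : IntervalIntegrable φ μ u v) (hs : s ∈ nhds q)
    (hf : ∀ p ∈ s, Continuous (f p)) (hf' : Continuous (f' q))
    (hf'_le : ∀ p ∈ s, ∀ x, ‖f' p x‖ ≤ K)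
    (hdiff : ∀ p ∈ s, ∀ x, HasFDerivAt (f · x) (f' p x) p) :
    HasFDerivAt (fun p => ∫ x in u..v, f p x * φ x ∂μ) (∫ x in u..v, φ x • f' q x ∂μ) q := by
  refine intervalIntegral.hasFDerivAt_integral_of_dominated_of_fderiv_le (𝕜 := ℝ)
    (F := fun p x => f p x * φ x) (F' := fun p x => φ x • f' p x) (bound := fun x => K * ‖φ x‖)
    hs ?_ (hφ.continuousOn_mul (hf q (mem_of_mem_nhds hs)).continuousOn) ?_ ?_
    (hφ.norm.const_mul K) ?_
  · exact eventually_of_mem hs fun p hp =>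
      (hf p hp).aestronglyMeasurable.mul hφ.def'.aestronglyMeasurable
  · exact hφ.def'.aestronglyMeasurable.smul hf'.aestronglyMeasurable
  · refine ae_of_all _ fun x _ p hp => ?_
    rw [norm_smul, mul_comm]
    exact mul_le_mul_of_nonneg_right (hf'_le p hp x) (norm_nonneg _)
  · exact ae_of_all _ fun x _ p hp => (hdiff p hp x).mul_const (φ x)

theorem norm_smul_fst_add_smul_snd_le (α β : ℝ) :
    ‖α • ContinuousLinearMap.fst ℝ ℝ ℝ + β • ContinuousLinearMap.snd ℝ ℝ ℝ‖ ≤ |α| + |β| :=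
  calc _ ≤ ‖α • ContinuousLinearMap.fst ℝ ℝ ℝ‖ + ‖β • ContinuousLinearMap.snd ℝ ℝ ℝ‖ :=
        norm_add_le _ _
    _ ≤ |α| * 1 + |β| * 1 := by
        rw [norm_smul, norm_smul, Real.norm_eq_abs, Real.norm_eq_abs]
        gcongr
        exacts [ContinuousLinearMap.norm_fst_le .., ContinuousLinearMap.norm_snd_le ..]
    _ = |α| + |β| := by ring

theorem hasFDerivAt_sqrt_mul_sq_add_sq {b x : ℝ} {q : ℝ × ℝ} (hb : 0 ≤ b) (hq : q.2 ≠ 0) :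
    HasFDerivAt (fun p : ℝ × ℝ => √(b * (p.1 - x) ^ 2 + p.2 ^ 2))
      ((b * (q.1 - x) / √(b * (q.1 - x) ^ 2 + q.2 ^ 2)) • ContinuousLinearMap.fst ℝ ℝ ℝ +
        (q.2 / √(b * (q.1 - x) ^ 2 + q.2 ^ 2)) • ContinuousLinearMap.snd ℝ ℝ ℝ) q := by
  have hpos : 0 < b * (q.1 - x) ^ 2 + q.2 ^ 2 := by positivity
  have hquad := ((hasFDerivAt_fst.sub_const x).pow 2 |>.const_mul b).add
    ((hasFDerivAt_snd (𝕜 := ℝ) (p := q)).pow 2)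
  refine ((hasDerivAt_sqrt hpos.ne').comp_hasFDerivAt q hquad).congr_fderiv ?_
  ext <;> simp <;> field_simp

theorem abs_div_sqrt_mul_sq_add_sq_add_abs_div_le {b : ℝ} (hb : 0 ≤ b) (u v : ℝ) :
    |b * u / √(b * u ^ 2 + v ^ 2)| + |v / √(b * u ^ 2 + v ^ 2)| ≤ √b + 1 := by
  have hu : √b * |u| ≤ √(b * u ^ 2 + v ^ 2) := by
    rw [← sqrt_sq_eq_abs, ← sqrt_mul hb]
    exact sqrt_le_sqrt (by nlinarith [sq_nonneg v])
  have hv : |v| ≤ √(b * u ^ 2 + v ^ 2) := by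
    rw [← sqrt_sq_eq_abs]
    exact sqrt_le_sqrt (by nlinarith [mul_nonneg hb (sq_nonneg u)])
  rw [abs_div, abs_div, abs_of_nonneg (sqrt_nonneg _), abs_mul, abs_of_nonneg hb]
  gcongr
  · refine div_le_of_le_mul₀ (sqrt_nonneg _) (sqrt_nonneg _) ?_
    calc b * |u| = √b * (√b * |u|) := by rw [← mul_assoc, mul_self_sqrt hb]
      _ ≤ √b * √(b * u ^ 2 + v ^ 2) := by gcongr
  · exact div_le_one_of_le₀ hv (sqrt_nonneg _)

theorem hasFDerivAt_intervalIntegral_sqrt_mul_sq_add_sq_mul {μ : Measure ℝ} {φ : ℝ → ℝ}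
    {u v b : ℝ} {q : ℝ × ℝ} (hφ : IntervalIntegrable φ μ u v) (hb : 0 ≤ b) (hq : q.2 ≠ 0) :
    HasFDerivAt (fun p : ℝ × ℝ => ∫ x in u..v, √(b * (p.1 - x) ^ 2 + p.2 ^ 2) * φ x ∂μ)
      ((b * ∫ x in u..v, (q.1 - x) * φ x / √(b * (q.1 - x) ^ 2 + q.2 ^ 2) ∂μ) •
          ContinuousLinearMap.fst ℝ ℝ ℝ +
        (q.2 * ∫ x in u..v, φ x / √(b * (q.1 - x) ^ 2 + q.2 ^ 2) ∂μ) •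
          ContinuousLinearMap.snd ℝ ℝ ℝ) q := by
  set r : ℝ → ℝ := fun x => √(b * (q.1 - x) ^ 2 + q.2 ^ 2)
  have hr : Continuous r := by fun_prop
  have hr0 : ∀ x, r x ≠ 0 := fun x => (sqrt_pos.2 (by positivity)).ne'
  have hα : Continuous fun x => b * (q.1 - x) / r x := (by fun_prop : Continuous _).div hr hr0
  have hβ : Continuous fun x => q.2 / r x := continuous_const.div hr hr0
  have hderiv := hasFDerivAt_intervalIntegral_mul_of_norm_fderiv_le hφ
    ((isOpen_ne_fun continuous_snd continuous_const).mem_nhds hq)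
    (fun p _ => by fun_prop) (hα.smul continuous_const |>.add (hβ.smul continuous_const))
    (fun p _ x => (norm_smul_fst_add_smul_snd_le _ _).trans
      (abs_div_sqrt_mul_sq_add_sq_add_abs_div_le hb _ _))
    (fun p hp x => hasFDerivAt_sqrt_mul_sq_add_sq hb hp)
  refine hderiv.congr_fderiv ?_
  simp only [smul_add, smul_smul]
  rw [intervalIntegral.integral_add
      ((hφ.mul_continuousOn hα.continuousOn).smul_continuousOn continuousOn_const)
      ((hφ.mul_continuousOn hβ.continuousOn).smul_continuousOn continuousOn_const),
    intervalIntegral.integral_smul_const, intervalIntegral.integral_smul_const,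
    ← intervalIntegral.integral_const_mul, ← intervalIntegral.integral_const_mul]
  congr 3 <;> ext x <;> ring

theorem stmt_3_general
    (W a b c : ℝ) (φ : ℝ → ℝ)
    (hφ1 : (∫ x in (0:ℝ)..W, φ x) = 1)
    (hb : 0 < b)
    (Cexp : ℝ → ℝ → ℝ)
    (hCexp : ∀ X Y : ℝ, Cexp X Y =
      ∫ x in (0:ℝ)..W, (a * Real.sqrt (b * (X - x) ^ 2 + Y ^ 2) - c * Y) * φ x) :
    ∀ X Y : ℝ, 0 < Y →
      HasFDerivAt (fun q : ℝ × ℝ => Cexp q.1 q.2)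
        ((a * b * ∫ x in (0:ℝ)..W,
            (X - x) * φ x / Real.sqrt (b * (X - x) ^ 2 + Y ^ 2)) •
          ContinuousLinearMap.fst ℝ ℝ ℝ +
         (a * Y * (∫ x in (0:ℝ)..W,
            φ x / Real.sqrt (b * (X - x) ^ 2 + Y ^ 2)) - c) •
          ContinuousLinearMap.snd ℝ ℝ ℝ)
        (X, Y) := by
  intro X Y hY
  -- `∫ φ = 1 ≠ 0` forces `φ` to be integrable, since non-integrable functions integrate to `0`.
  have hφ : IntervalIntegrable φ volume 0 W :=
    intervalIntegral.intervalIntegrable_of_integral_ne_zero (by rw [hφ1]; exact one_ne_zero)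
  have hCexp_eq : (fun q : ℝ × ℝ => Cexp q.1 q.2) = fun q =>
      a * (∫ x in (0:ℝ)..W, √(b * (q.1 - x) ^ 2 + q.2 ^ 2) * φ x) - c * q.2 := by
    ext q
    have hsqrt : IntervalIntegrable (fun x => √(b * (q.1 - x) ^ 2 + q.2 ^ 2) * φ x) volume 0 W :=
      hφ.continuousOn_mul (by fun_prop)
    simp only [hCexp, sub_mul, mul_assoc]
    rw [intervalIntegral.integral_sub (hsqrt.const_mul a) ((hφ.const_mul q.2).const_mul c),
      intervalIntegral.integral_const_mul, intervalIntegral.integral_const_mul,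
      intervalIntegral.integral_const_mul, hφ1, mul_one]
  rw [hCexp_eq]
  refine (((hasFDerivAt_intervalIntegral_sqrt_mul_sq_add_sq_mul hφ hb.le hY.ne').const_mul a).sub
    ((hasFDerivAt_snd (𝕜 := ℝ)).const_mul c)).congr_fderiv ?_
  ext <;> simp <;> ring

/-- `C_exp` is totally differentiable at every `(X,Y)` with `Y > 0`, with the partial
derivatives obtained by differentiation under the integral sign. -/
theorem stmt_3
    (W M a b c : ℝ) (φ : ℝ → ℝ)
    (hW : 0 < W) (hM : 0 < M) (hφm : Measurable φ)
    (hφ0 : ∀ x, 0 ≤ φ x) (hφM : ∀ x, φ x ≤ M)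
    (hφs : ∀ x, x ∉ Set.Icc (0:ℝ) W → φ x = 0)
    (hφ1 : (∫ x in (0:ℝ)..W, φ x) = 1)
    (hb : 0 < b) (hc : 0 < c) (hca : c < a)
    (Cexp : ℝ → ℝ → ℝ)
    (hCexp : ∀ X Y : ℝ, Cexp X Y =
      ∫ x in (0:ℝ)..W, (a * Real.sqrt (b * (X - x) ^ 2 + Y ^ 2) - c * Y) * φ x) :
    ∀ X Y : ℝ, 0 < Y →
      HasFDerivAt (fun q : ℝ × ℝ => Cexp q.1 q.2)
        ((a * b * ∫ x in (0:ℝ)..W,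
            (X - x) * φ x / Real.sqrt (b * (X - x) ^ 2 + Y ^ 2)) •
          ContinuousLinearMap.fst ℝ ℝ ℝ +
         (a * Y * (∫ x in (0:ℝ)..W,
            φ x / Real.sqrt (b * (X - x) ^ 2 + Y ^ 2)) - c) •
          ContinuousLinearMap.snd ℝ ℝ ℝ)
        (X, Y) :=
  stmt_3_general W a b c φ hφ1 hb Cexp hCexp
end

section
/- For every fixed X ∈ ℝ, the quantity a·Y·∫₀^W φ(x)/√(b(X−x)² + Y²) dx − c (which equals ∂C_exp/∂Y (X,Y) for Y > 0) tends to −c as Y → 0⁺. In particular, there exists Y₀ > 0 such that ∂C_exp/∂Y (X,Y) < 0 for all Y ∈ (0,Y₀). -/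
open Real MeasureTheory Filter Topology

lemma abs_div_sqrt_add_sq_le_one {u : ℝ} (hu : 0 ≤ u) (Y : ℝ) : |Y| / √(u + Y ^ 2) ≤ 1 :=
  div_le_one_of_le₀ (abs_le_sqrt (by linarith)) (sqrt_nonneg _)

/-- Dominated convergence: `Y / √(b (X - x)² + Y²)` is bounded by `1` and tends to `0` for
every `x ≠ X`. -/
lemma tendsto_mul_intervalIntegral_div_sqrt_nhds_zero {μ : Measure ℝ} [NullSingletonClass μ]
    {f : ℝ → ℝ} {α β b : ℝ} (hf : IntervalIntegrable f μ α β) (hb : 0 < b) (X : ℝ) :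
    Tendsto (fun Y : ℝ => Y * ∫ x in α..β, f x / √(b * (X - x) ^ 2 + Y ^ 2) ∂μ)
      (𝓝 0) (𝓝 0) := by
  simp only [← intervalIntegral.integral_const_mul]
  have h_meas : ∀ Y : ℝ, AEStronglyMeasurable
      (fun x => Y * (f x / √(b * (X - x) ^ 2 + Y ^ 2))) (μ.restrict (Set.uIoc α β)) := fun Y => by
    have h_cont : Continuous fun x => √(b * (X - x) ^ 2 + Y ^ 2) := by fun_prop
    exact (hf.def'.aestronglyMeasurable.div₀ h_cont.aestronglyMeasurable).const_mul Y
  have h_bound : ∀ Y x, ‖Y * (f x / √(b * (X - x) ^ 2 + Y ^ 2))‖ ≤ ‖f x‖ := fun Y x => by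
    rw [mul_div_left_comm, norm_mul, norm_div, Real.norm_eq_abs Y,
      Real.norm_of_nonneg (sqrt_nonneg _)]
    exact mul_le_of_le_one_right (norm_nonneg _)
      (abs_div_sqrt_add_sq_le_one (by positivity) Y)
  have h_lim : ∀ x ≠ X, Tendsto (fun Y : ℝ => Y * (f x / √(b * (X - x) ^ 2 + Y ^ 2)))
      (𝓝 0) (𝓝 0) := fun x hx => by
    have h_pos : √(b * (X - x) ^ 2 + 0 ^ 2) ≠ 0 :=
      (sqrt_pos.2 (by have := sub_ne_zero.2 hx.symm; positivity)).ne'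
    have h_cont : ContinuousAt (fun Y : ℝ => Y * (f x / √(b * (X - x) ^ 2 + Y ^ 2))) 0 := by
      fun_prop (disch := exact h_pos)
    simpa using h_cont.tendsto
  simpa using intervalIntegral.tendsto_integral_filter_of_dominated_convergence (fun x => ‖f x‖)
    (Eventually.of_forall h_meas)
    (Eventually.of_forall fun Y => ae_of_all _ fun x _ => h_bound Y x)
    hf.norm ((μ.ae_ne X).mono fun x hx _ => h_lim x hx)

theorem stmt_4_general
    (W a b c : ℝ) (φ : ℝ → ℝ)
    (hφ1 : (∫ x in (0:ℝ)..W, φ x) = 1)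
    (hb : 0 < b) (hc : 0 < c) :
    ∀ X : ℝ,
      Tendsto (fun Y : ℝ =>
          a * Y * (∫ x in (0:ℝ)..W, φ x / Real.sqrt (b * (X - x) ^ 2 + Y ^ 2)) - c)
        (nhdsWithin 0 (Set.Ioi 0)) (nhds (-c)) ∧
      ∃ Y₀ : ℝ, 0 < Y₀ ∧ ∀ Y : ℝ, 0 < Y → Y < Y₀ →
        a * Y * (∫ x in (0:ℝ)..W, φ x / Real.sqrt (b * (X - x) ^ 2 + Y ^ 2)) - c < 0 := by
  intro X
  -- A non-integrable function has integral `0` by convention, so `φ` is integrable.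
  have hφ : IntervalIntegrable φ volume 0 W := by
    by_contra h
    simp [intervalIntegral.integral_undef h] at hφ1
  have h_lim : Tendsto (fun Y : ℝ =>
      a * Y * (∫ x in (0:ℝ)..W, φ x / √(b * (X - x) ^ 2 + Y ^ 2)) - c) (𝓝[>] 0) (𝓝 (-c)) := by
    simpa [mul_assoc] using ((tendsto_mul_intervalIntegral_div_sqrt_nhds_zero hφ hb X).const_mul a
      |>.sub_const c).mono_left nhdsWithin_le_nhds
  refine ⟨h_lim, ?_⟩
  obtain ⟨Y₀, hY₀, h_sub⟩ :=
    mem_nhdsGT_iff_exists_Ioo_subset.1 (h_lim.eventually_lt_const (neg_neg_of_pos hc))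
  exact ⟨Y₀, hY₀, fun Y h₁ h₂ => h_sub ⟨h₁, h₂⟩⟩

/-- For fixed `X`, the quantity `a·Y·∫₀^W φ(x)/√(b(X−x)² + Y²) dx − c` tends to `−c`
as `Y → 0⁺`; in particular it is negative for all sufficiently small `Y > 0`. -/
theorem stmt_4
    (W M a b c : ℝ) (φ : ℝ → ℝ)
    (hW : 0 < W) (hM : 0 < M) (hφm : Measurable φ)
    (hφ0 : ∀ x, 0 ≤ φ x) (hφM : ∀ x, φ x ≤ M)
    (hφs : ∀ x, x ∉ Set.Icc (0:ℝ) W → φ x = 0)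
    (hφ1 : (∫ x in (0:ℝ)..W, φ x) = 1)
    (hb : 0 < b) (hc : 0 < c) (hca : c < a)
    (Cexp : ℝ → ℝ → ℝ)
    (hCexp : ∀ X Y : ℝ, Cexp X Y =
      ∫ x in (0:ℝ)..W, (a * Real.sqrt (b * (X - x) ^ 2 + Y ^ 2) - c * Y) * φ x) :
    ∀ X : ℝ,
      Tendsto (fun Y : ℝ =>
          a * Y * (∫ x in (0:ℝ)..W, φ x / Real.sqrt (b * (X - x) ^ 2 + Y ^ 2)) - c)
        (nhdsWithin 0 (Set.Ioi 0)) (nhds (-c)) ∧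
      ∃ Y₀ : ℝ, 0 < Y₀ ∧ ∀ Y : ℝ, 0 < Y → Y < Y₀ →
        a * Y * (∫ x in (0:ℝ)..W, φ x / Real.sqrt (b * (X - x) ^ 2 + Y ^ 2)) - c < 0 :=
  stmt_4_general W a b c φ hφ1 hb hc
end

section
/- For every Y > 0: if X ≤ 0 then a·b·∫₀^W (X−x)·φ(x)/√(b(X−x)² + Y²) dx < 0, and if X ≥ W then a·b·∫₀^W (X−x)·φ(x)/√(b(X−x)² + Y²) dx > 0. That is, the partial derivative of C_exp with respect to X is strictly negative for X ≤ 0 and strictly positive for X ≥ W. -/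
open Real MeasureTheory Filter

lemma aux_pos (W M B : ℝ) (hW : 0 < W) (hM : 0 < M)
    (φ g : ℝ → ℝ) (hφm : Measurable φ) (hgm : Measurable g)
    (hφ0 : ∀ x, 0 ≤ φ x) (hφM : ∀ x, φ x ≤ M)
    (hφ1 : (∫ x in (0:ℝ)..W, φ x) = 1)
    (hg0 : ∀ x ∈ Set.Ioc (0:ℝ) W, 0 ≤ g x)
    (hg0' : ∀ x ∈ Set.Ioo (0:ℝ) W, 0 < g x)
    (hgB : ∀ x ∈ Set.Ioc (0:ℝ) W, |g x| ≤ B) :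
    0 < ∫ x in (0:ℝ)..W, g x * φ x := by
  rw [intervalIntegral.integral_of_le hW.le] at hφ1 ⊢
  have hφint : IntegrableOn φ (Set.Ioc 0 W) := by
    refine Integrable.mono' (integrable_const M) hφm.aestronglyMeasurable ?_
    exact ae_of_all _ fun x => by rw [Real.norm_eq_abs, abs_of_nonneg (hφ0 x)]; exact hφM x
  have hsupp : 0 < volume (Function.support φ ∩ Set.Ioc 0 W) := by
    rw [← setIntegral_pos_iff_support_of_nonneg_ae (ae_of_all _ hφ0) hφint, hφ1]
    norm_num
  have hsupp' : 0 < volume (Function.support φ ∩ Set.Ioo 0 W) := by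
    by_contra h
    push_neg at h
    have h0 : volume (Function.support φ ∩ Set.Ioo 0 W) = 0 := le_antisymm h bot_le
    have hsub : Function.support φ ∩ Set.Ioc 0 W ⊆
        (Function.support φ ∩ Set.Ioo 0 W) ∪ {W} := by
      rintro x ⟨hx1, hx2, hx3⟩
      rcases lt_or_eq_of_le hx3 with h' | h'
      · exact Or.inl ⟨hx1, hx2, h'⟩
      · exact Or.inr (by simp [h'])
    have := measure_mono_null hsub
      (measure_union_null h0 (by simp))
    exact absurd this hsupp.ne'
  have hBp : 0 ≤ B := le_trans (abs_nonneg _) (hgB (W/2) ⟨by linarith, by linarith⟩)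
  have hint : IntegrableOn (fun x => g x * φ x) (Set.Ioc 0 W) := by
    refine Integrable.mono' (integrable_const (B * M))
      (hgm.mul hφm).aestronglyMeasurable ?_
    rw [ae_restrict_iff' measurableSet_Ioc]
    refine ae_of_all _ fun x hx => ?_
    rw [Real.norm_eq_abs, abs_mul, abs_of_nonneg (hφ0 x)]
    exact mul_le_mul (hgB x hx) (hφM x) (hφ0 x) hBp
  rw [setIntegral_pos_iff_support_of_nonneg_ae ?_ hint]
  · refine lt_of_lt_of_le hsupp' (measure_mono ?_)
    rintro x ⟨hx1, hx2⟩
    refine ⟨?_, hx2.1, hx2.2.le⟩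
    exact mul_ne_zero (hg0' x hx2).ne' hx1
  · exact (ae_restrict_iff' measurableSet_Ioc).2
      (ae_of_all _ fun x hx => mul_nonneg (hg0 x hx) (hφ0 x))

/-- For `Y > 0`, the partial derivative of `C_exp` with respect to `X` is strictly
negative for `X ≤ 0` and strictly positive for `X ≥ W`. -/
theorem stmt_5
    (W M a b c : ℝ) (φ : ℝ → ℝ)
    (hW : 0 < W) (hM : 0 < M) (hφm : Measurable φ)
    (hφ0 : ∀ x, 0 ≤ φ x) (hφM : ∀ x, φ x ≤ M)
    (hφs : ∀ x, x ∉ Set.Icc (0:ℝ) W → φ x = 0)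
    (hφ1 : (∫ x in (0:ℝ)..W, φ x) = 1)
    (hb : 0 < b) (hc : 0 < c) (hca : c < a)
    (Cexp : ℝ → ℝ → ℝ)
    (hCexp : ∀ X Y : ℝ, Cexp X Y =
      ∫ x in (0:ℝ)..W, (a * Real.sqrt (b * (X - x) ^ 2 + Y ^ 2) - c * Y) * φ x) :
    ∀ X Y : ℝ, 0 < Y →
      (X ≤ 0 →
        a * b * (∫ x in (0:ℝ)..W,
          (X - x) * φ x / Real.sqrt (b * (X - x) ^ 2 + Y ^ 2)) < 0) ∧
      (W ≤ X →
        0 < a * b * (∫ x in (0:ℝ)..W,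
          (X - x) * φ x / Real.sqrt (b * (X - x) ^ 2 + Y ^ 2))) := by
  intro X Y hY
  have ha : 0 < a := hc.trans hca
  set D : ℝ → ℝ := fun x => Real.sqrt (b * (X - x) ^ 2 + Y ^ 2) with hD
  have hDpos : ∀ x, 0 < D x := fun x => Real.sqrt_pos.2 (by positivity)
  have hDY : ∀ x, Y ≤ D x := by
    intro x
    have : Y = Real.sqrt (Y ^ 2) := by rw [Real.sqrt_sq hY.le]
    rw [this]
    exact Real.sqrt_le_sqrt (by nlinarith [sq_nonneg (X - x)])
  have hDm : Measurable D := by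
    apply Measurable.sqrt
    fun_prop
  have hB : ∀ x ∈ Set.Ioc (0:ℝ) W, |(X - x) / D x| ≤ (|X| + W) / Y := by
    intro x hx
    rw [abs_div, abs_of_pos (hDpos x)]
    apply div_le_div₀ (by positivity) _ hY (hDY x)
    have : |X - x| ≤ |X| + |x| := abs_sub _ _
    have hxa : |x| ≤ W := abs_le.2 ⟨by linarith [hx.1], hx.2⟩
    linarith
  constructor
  · intro hX
    have key : 0 < ∫ x in (0:ℝ)..W, ((x - X) / D x) * φ x := by
      refine aux_pos W M ((|X| + W) / Y) hW hM φ _ hφm (by fun_prop) hφ0 hφM hφ1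
        ?_ ?_ ?_
      · intro x hx
        exact div_nonneg (by linarith [hx.1]) (hDpos x).le
      · intro x hx
        exact div_pos (by linarith [hx.1]) (hDpos x)
      · intro x hx
        have := hB x hx
        rwa [show X - x = -(x - X) by ring, neg_div, abs_neg] at this
    have heq : (∫ x in (0:ℝ)..W, (X - x) * φ x / D x)
        = -∫ x in (0:ℝ)..W, ((x - X) / D x) * φ x := by
      rw [← intervalIntegral.integral_neg]
      apply intervalIntegral.integral_congr
      intro x _
      ring
    rw [heq]
    nlinarith [mul_pos (mul_pos ha hb) key]
  · intro hX
    have key : 0 < ∫ x in (0:ℝ)..W, ((X - x) / D x) * φ x := by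
      refine aux_pos W M ((|X| + W) / Y) hW hM φ _ hφm (by fun_prop) hφ0 hφM hφ1
        ?_ ?_ (hB)
      · intro x hx
        exact div_nonneg (by linarith [hx.2]) (hDpos x).le
      · intro x hx
        exact div_pos (by linarith [hx.2]) (hDpos x)
    have heq : (∫ x in (0:ℝ)..W, (X - x) * φ x / D x)
        = ∫ x in (0:ℝ)..W, ((X - x) / D x) * φ x := by
      apply intervalIntegral.integral_congr
      intro x _
      ring
    rw [heq]
    positivity
end

section
/- The expected cost C_exp attains a global minimum over ℝ × [0,∞), and every global minimizer (X*,Y*) of C_exp over ℝ × [0,∞) satisfies 0 < X* < W and Y* > 0. -/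
/-!
The cost `a √(b (X - x)² + Y²) - c Y` is Lipschitz in `(X, Y)` and, because `a > c`, at least
`(a - c) min 1 √b (‖(X, Y)‖ - W)` for `x ∈ [0, W]`; so the expected cost is continuous and coercive
on the closed half-plane `Y ≥ 0` and attains its minimum there.

At a point with `Y = 0` the `Y`-derivative of the expected cost is `-c ∫ φ = -c < 0`: the
integrand is differentiable in `Y` except at the single point `x = X`, a null set. Hence a
minimizer has `Y* > 0`. Then the cost is differentiable in `X`, and its derivative
`∫ a b (X - x) / √(b (X - x)² + Y²) φ(x) dx` must vanish at `X*`; if `X* ∉ (0, W)` the integrand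
has a strict sign on `(0, W)`, where `φ` carries positive mass.
-/

open Real MeasureTheory Filter Set Topology

section Density

variable {W : ℝ} {φ : ℝ → ℝ}

lemma le_intervalIntegral_mul_of_le {g : ℝ → ℝ} {m : ℝ} (hW : 0 ≤ W) (hφ0 : ∀ x, 0 ≤ φ x)
    (hφ1 : ∫ x in 0..W, φ x = 1) (hg : Continuous g) (hgm : ∀ x ∈ Icc 0 W, m ≤ g x) :
    m ≤ ∫ x in 0..W, g x * φ x := by
  have hφi := intervalIntegral.intervalIntegrable_of_integral_ne_zero (hφ1.trans_ne one_ne_zero)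
  calc m = ∫ x in 0..W, m * φ x := by rw [intervalIntegral.integral_const_mul, hφ1, mul_one]
    _ ≤ ∫ x in 0..W, g x * φ x :=
      intervalIntegral.integral_mono_on hW (hφi.const_mul m) (hφi.continuousOn_mul hg.continuousOn)
        fun x hx => mul_le_mul_of_nonneg_right (hgm x hx) (hφ0 x)

lemma intervalIntegral_mul_pos {g : ℝ → ℝ} (hW : 0 ≤ W) (hφ0 : ∀ x, 0 ≤ φ x)
    (hφ : 0 < ∫ x in 0..W, φ x) (hg : Continuous g) (hgpos : ∀ x ∈ Ioo 0 W, 0 < g x) :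
    0 < ∫ x in 0..W, g x * φ x := by
  have hφi := intervalIntegral.intervalIntegrable_of_integral_ne_zero hφ.ne'
  have hgφi := hφi.continuousOn_mul hg.continuousOn
  rw [intervalIntegral.integral_of_le hW, integral_Ioc_eq_integral_Ioo] at hφ ⊢
  rw [setIntegral_pos_iff_support_of_nonneg_ae (.of_forall hφ0)
    (hφi.1.mono_set Ioo_subset_Ioc_self)] at hφ
  refine (setIntegral_pos_iff_support_of_nonneg_ae ?_ (hgφi.1.mono_set Ioo_subset_Ioc_self)).2
    (hφ.trans_le (measure_mono ?_))
  · filter_upwards [ae_restrict_mem measurableSet_Ioo] with x hx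
    exact mul_nonneg (hgpos x hx).le (hφ0 x)
  · rintro x ⟨hφx, hx⟩
    exact ⟨mul_ne_zero (hgpos x hx).ne' hφx, hx⟩

lemma lipschitzWith_intervalIntegral_mul {α : Type*} [PseudoMetricSpace α] {G : α → ℝ → ℝ}
    {K : NNReal} (hW : 0 ≤ W) (hφ0 : ∀ x, 0 ≤ φ x) (hφ1 : ∫ x in 0..W, φ x = 1)
    (hGc : ∀ p, Continuous (G p)) (hG : ∀ x, LipschitzWith K (G · x)) :
    LipschitzWith K (fun p => ∫ x in 0..W, G p x * φ x) := by
  have hφi := intervalIntegral.intervalIntegrable_of_integral_ne_zero (hφ1.trans_ne one_ne_zero)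
  have hint : ∀ p, IntervalIntegrable (fun x => G p x * φ x) volume 0 W :=
    fun p => hφi.continuousOn_mul (hGc p).continuousOn
  refine LipschitzWith.of_dist_le_mul fun p q => ?_
  rw [Real.dist_eq, ← intervalIntegral.integral_sub (hint p) (hint q)]
  calc |∫ x in 0..W, (G p x * φ x - G q x * φ x)|
      ≤ ∫ x in 0..W, K * dist p q * φ x := by
        refine (intervalIntegral.abs_integral_le_integral_abs hW).trans
          (intervalIntegral.integral_mono_on hW ((hint p).sub (hint q)).abs (hφi.const_mul _)
            fun x _ => ?_)
        rw [← sub_mul, abs_mul, abs_of_nonneg (hφ0 x), ← Real.dist_eq]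
        exact mul_le_mul_of_nonneg_right ((hG x).dist_le_mul p q) (hφ0 x)
    _ = K * dist p q := by rw [intervalIntegral.integral_const_mul, hφ1, mul_one]

lemma hasDerivAt_intervalIntegral_mul {F F' : ℝ → ℝ → ℝ} {s₀ K : ℝ}
    (hφ : IntervalIntegrable φ volume 0 W) (hFc : ∀ s, Continuous (F s))
    (hF'c : Continuous (F' s₀)) (hF'K : ∀ s x, |F' s x| ≤ K)
    (hF : ∀ᵐ x, ∀ s, HasDerivAt (F · x) (F' s x) s) :
    HasDerivAt (fun s => ∫ x in 0..W, F s x * φ x) (∫ x in 0..W, F' s₀ x * φ x) s₀ := by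
  have hint : ∀ {G : ℝ → ℝ}, Continuous G → IntervalIntegrable (fun x => G x * φ x) volume 0 W :=
    fun hG => hφ.continuousOn_mul hG.continuousOn
  refine (intervalIntegral.hasDerivAt_integral_of_dominated_loc_of_deriv_le
    (F' := fun s x => F' s x * φ x) (bound := fun x => K * |φ x|) univ_mem
    (.of_forall fun s => (hint (hFc s)).def'.aestronglyMeasurable) (hint (hFc s₀))
    (hint hF'c).def'.aestronglyMeasurable ?_ (hφ.abs.const_mul K) ?_).2
  · refine .of_forall fun x _ s _ => ?_
    rw [Real.norm_eq_abs, abs_mul]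
    exact mul_le_mul_of_nonneg_right (hF'K s x) (abs_nonneg _)
  · filter_upwards [hF] with x hx _ s _ using (hx s).mul_const (φ x)

end Density

lemma exists_isMinOn_of_le_norm {E : Type*} [NormedAddCommGroup E] [ProperSpace E] {f : E → ℝ}
    {s : Set E} {k C : ℝ} (hf : Continuous f) (hs : IsClosed s) (hne : s.Nonempty) (hk : 0 < k)
    (hfs : ∀ p ∈ s, k * ‖p‖ - C ≤ f p) : ∃ p ∈ s, IsMinOn f s p := by
  obtain ⟨p₀, hp₀⟩ := hne
  refine hf.continuousOn.exists_isMinOn' hs hp₀ ?_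
  have hlim : Tendsto (fun p => k * ‖p‖ - C) (cocompact E) atTop :=
    tendsto_atTop_add_const_right _ _ (tendsto_norm_cocompact_atTop.const_mul_atTop hk)
  rw [eventually_inf_principal]
  filter_upwards [hlim.eventually_ge_atTop (f p₀)] with p hp hps using hp.trans (hfs p hps)

lemma exists_lt_of_hasDerivAt_neg {g : ℝ → ℝ} {g' y : ℝ} (hg : HasDerivAt g g' y)
    (hg' : g' < 0) : ∃ z, y < z ∧ g z < g y := by
  have hslope := ((hasDerivAt_iff_tendsto_slope.1 hg).mono_left (nhdsGT_le_nhdsNE y)).eventually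
    (gt_mem_nhds hg')
  obtain ⟨z, hz, hyz⟩ := (hslope.and self_mem_nhdsWithin).exists
  refine ⟨z, hyz, ?_⟩
  rw [slope_def_field, div_neg_iff] at hz
  rcases hz with ⟨-, h⟩ | ⟨h, -⟩ <;> linarith [hyz]

lemma abs_sqrt_sq_add_sq_sub_le (u v u' v' : ℝ) :
    |√(u ^ 2 + v ^ 2) - √(u' ^ 2 + v' ^ 2)| ≤ |u - u'| + |v - v'| := by
  rw [← Complex.norm_add_mul_I, ← Complex.norm_add_mul_I]
  refine (abs_norm_sub_norm_le _ _).trans ?_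
  simpa using Complex.norm_le_abs_re_add_abs_im ((u + v * Complex.I) - (u' + v' * Complex.I))

noncomputable def cost (a b c X Y x : ℝ) : ℝ := a * √(b * (X - x) ^ 2 + Y ^ 2) - c * Y

noncomputable def expectedCost (a b c W : ℝ) (φ : ℝ → ℝ) (X Y : ℝ) : ℝ :=
  ∫ x in 0..W, cost a b c X Y x * φ x

lemma continuous_cost (a b c X Y : ℝ) : Continuous (cost a b c X Y) := by
  unfold cost; fun_prop

section Cost

variable {a b c : ℝ}

lemma lipschitzWith_cost (ha : 0 ≤ a) (hb : 0 ≤ b) (hc : 0 ≤ c) (x : ℝ) :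
    LipschitzWith (a * (√b + 1) + c).toNNReal (fun p : ℝ × ℝ => cost a b c p.1 p.2 x) := by
  refine LipschitzWith.of_dist_le' fun p q => ?_
  have hsq : ∀ X, b * (X - x) ^ 2 = (√b * (X - x)) ^ 2 := fun X => by
    rw [mul_pow, sq_sqrt hb]
  have hsqrt := abs_sqrt_sq_add_sq_sub_le (√b * (p.1 - x)) p.2 (√b * (q.1 - x)) q.2
  rw [← hsq, ← hsq, ← mul_sub, sub_sub_sub_cancel_right, abs_mul, abs_of_nonneg (sqrt_nonneg b)]
    at hsqrt
  have hdX : |p.1 - q.1| ≤ dist p q := by rw [Prod.dist_eq, ← Real.dist_eq]; exact le_max_left _ _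
  have hdY : |p.2 - q.2| ≤ dist p q := by rw [Prod.dist_eq, ← Real.dist_eq]; exact le_max_right _ _
  calc dist (cost a b c p.1 p.2 x) (cost a b c q.1 q.2 x)
      = |a * (√(b * (p.1 - x) ^ 2 + p.2 ^ 2) - √(b * (q.1 - x) ^ 2 + q.2 ^ 2))
          - c * (p.2 - q.2)| := by rw [Real.dist_eq, cost, cost]; ring_nf
    _ ≤ a * (√b * |p.1 - q.1| + |p.2 - q.2|) + c * |p.2 - q.2| := by
        refine (abs_sub _ _).trans ?_
        rw [abs_mul, abs_mul, abs_of_nonneg ha, abs_of_nonneg hc]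
        gcongr
    _ ≤ (a * (√b + 1) + c) * dist p q := by
        have := sqrt_nonneg b
        nlinarith [mul_le_mul_of_nonneg_left hdX (mul_nonneg ha this)]

lemma cost_ge (hb : 0 ≤ b) (hc : 0 ≤ c) (hca : c ≤ a) {W x : ℝ} {p : ℝ × ℝ} (hp : 0 ≤ p.2)
    (hx : x ∈ Icc 0 W) : (a - c) * min 1 √b * (‖p‖ - W) ≤ cost a b c p.1 p.2 x := by
  obtain ⟨X, Y⟩ := p
  have hY : 0 ≤ Y := hp
  set s := √(b * (X - x) ^ 2 + Y ^ 2)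
  have hYs : Y ≤ s := le_sqrt_of_sq_le (by nlinarith [sq_nonneg (X - x)])
  have hXs : √b * |X - x| ≤ s := by
    rw [← sqrt_sq_eq_abs, ← sqrt_mul hb]
    exact sqrt_le_sqrt (by nlinarith [sq_nonneg Y])
  have hnorm : ‖(X, Y)‖ - W ≤ max |X - x| Y := by
    have hX : |X| ≤ |X - x| + W := by
      have := abs_sub_abs_le_abs_sub X x
      rw [abs_of_nonneg hx.1] at this; linarith [hx.2]
    rw [Prod.norm_def, Real.norm_eq_abs, Real.norm_eq_abs, abs_of_nonneg hY, sub_le_iff_le_add]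
    exact max_le (hX.trans (by gcongr; exact le_max_left _ _))
      (by linarith [le_max_right |X - x| Y, hx.1.trans hx.2])
  have hm0 : 0 ≤ min 1 √b := le_min zero_le_one (sqrt_nonneg b)
  have hm : min 1 √b * (‖(X, Y)‖ - W) ≤ s := by
    refine (mul_le_mul_of_nonneg_left hnorm hm0).trans ?_
    rw [mul_max_of_nonneg _ _ hm0]
    exact max_le ((mul_le_mul_of_nonneg_right (min_le_right _ _) (abs_nonneg _)).trans hXs)
      ((mul_le_mul_of_nonneg_right (min_le_left _ _) hY).trans (by linarith))
  calc (a - c) * min 1 √b * (‖(X, Y)‖ - W) ≤ (a - c) * s := by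
        rw [mul_assoc]; exact mul_le_mul_of_nonneg_left hm (by linarith)
    _ ≤ cost a b c X Y x := by unfold cost; nlinarith

lemma hasDerivAt_cost_fst {X Y x : ℝ} (h : b * (X - x) ^ 2 + Y ^ 2 ≠ 0) :
    HasDerivAt (fun X => cost a b c X Y x) (a * (b * (X - x)) / √(b * (X - x) ^ 2 + Y ^ 2)) X := by
  have := (((((hasDerivAt_id X).sub_const x).pow 2).const_mul b).add_const (Y ^ 2)).sqrt h
  refine ((this.const_mul a).sub_const (c * Y)).congr_deriv ?_
  simp only [id, pow_one, Nat.cast_ofNat, mul_one, Nat.add_one_sub_one, Pi.pow_apply]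
  field_simp

lemma hasDerivAt_cost_snd {X Y x : ℝ} (h : b * (X - x) ^ 2 + Y ^ 2 ≠ 0) :
    HasDerivAt (fun Y => cost a b c X Y x) (a * Y / √(b * (X - x) ^ 2 + Y ^ 2) - c) Y := by
  have := (((hasDerivAt_id Y).pow 2).const_add (b * (X - x) ^ 2)).sqrt h
  refine ((this.const_mul a).sub ((hasDerivAt_id Y).const_mul c)).congr_deriv ?_
  simp only [id, pow_one, Nat.cast_ofNat, mul_one, Nat.add_one_sub_one, Pi.pow_apply]
  field_simp

lemma continuous_deriv_cost_fst (hb : 0 ≤ b) {Y : ℝ} (hY : 0 < Y) (X : ℝ) :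
    Continuous fun x => a * (b * (X - x)) / √(b * (X - x) ^ 2 + Y ^ 2) :=
  Continuous.div (by fun_prop) (by fun_prop) fun x => (sqrt_pos.2 (by positivity)).ne'

lemma abs_deriv_cost_fst_le (ha : 0 ≤ a) (hb : 0 ≤ b) (X Y x : ℝ) :
    |a * (b * (X - x)) / √(b * (X - x) ^ 2 + Y ^ 2)| ≤ a * √b := by
  rw [abs_div, abs_mul, abs_of_nonneg ha, abs_of_nonneg (sqrt_nonneg _), mul_div_assoc]
  refine mul_le_mul_of_nonneg_left (div_le_of_le_mul₀ (sqrt_nonneg _) (sqrt_nonneg _) ?_) ha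
  rw [← sqrt_mul hb]
  exact abs_le_sqrt (by nlinarith [sq_nonneg Y, sq_nonneg (X - x)])

lemma abs_deriv_cost_snd_le (ha : 0 ≤ a) (hb : 0 ≤ b) (hc : 0 ≤ c) (X Y x : ℝ) :
    |a * Y / √(b * (X - x) ^ 2 + Y ^ 2) - c| ≤ a + c := by
  have hY : |Y / √(b * (X - x) ^ 2 + Y ^ 2)| ≤ 1 := by
    rw [abs_div, abs_of_nonneg (sqrt_nonneg _)]
    exact div_le_one_of_le₀ (abs_le_sqrt (by nlinarith [sq_nonneg (X - x)])) (sqrt_nonneg _)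
  refine (abs_sub _ _).trans ?_
  rw [mul_div_assoc, abs_mul, abs_of_nonneg ha, abs_of_nonneg hc]
  nlinarith

end Cost

section ExpectedCost

variable {a b c W : ℝ} {φ : ℝ → ℝ}

lemma continuous_expectedCost (ha : 0 ≤ a) (hb : 0 ≤ b) (hc : 0 ≤ c) (hW : 0 ≤ W)
    (hφ0 : ∀ x, 0 ≤ φ x) (hφ1 : ∫ x in 0..W, φ x = 1) :
    Continuous (fun p : ℝ × ℝ => expectedCost a b c W φ p.1 p.2) := by
  have := lipschitzWith_intervalIntegral_mul (G := fun p : ℝ × ℝ => cost a b c p.1 p.2) hW hφ0 hφ1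
    (fun p => continuous_cost a b c p.1 p.2) (lipschitzWith_cost ha hb hc)
  exact this.continuous

lemma expectedCost_ge (hb : 0 ≤ b) (hc : 0 ≤ c) (hca : c ≤ a) (hW : 0 ≤ W)
    (hφ0 : ∀ x, 0 ≤ φ x) (hφ1 : ∫ x in 0..W, φ x = 1) {p : ℝ × ℝ} (hp : 0 ≤ p.2) :
    (a - c) * min 1 √b * ‖p‖ - (a - c) * min 1 √b * W ≤ expectedCost a b c W φ p.1 p.2 := by
  rw [← mul_sub]
  exact le_intervalIntegral_mul_of_le hW hφ0 hφ1 (continuous_cost a b c p.1 p.2)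
    fun x hx => cost_ge hb hc hca hp hx

lemma hasDerivAt_expectedCost_fst (hφ : IntervalIntegrable φ volume 0 W) (ha : 0 ≤ a)
    (hb : 0 ≤ b) {Y : ℝ} (hY : 0 < Y) (X : ℝ) :
    HasDerivAt (fun X => expectedCost a b c W φ X Y)
      (∫ x in 0..W, a * (b * (X - x)) / √(b * (X - x) ^ 2 + Y ^ 2) * φ x) X := by
  have hpos : ∀ X x, b * (X - x) ^ 2 + Y ^ 2 ≠ 0 := fun X x => by positivity
  exact hasDerivAt_intervalIntegral_mul hφ (fun X => continuous_cost a b c X Y)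
    (continuous_deriv_cost_fst hb hY X) (fun X x => abs_deriv_cost_fst_le ha hb X Y x)
    (.of_forall fun x X => hasDerivAt_cost_fst (hpos X x))

lemma hasDerivAt_expectedCost_snd_zero (hφ1 : ∫ x in 0..W, φ x = 1) (ha : 0 ≤ a) (hb : 0 < b)
    (hc : 0 ≤ c) (X : ℝ) : HasDerivAt (fun Y => expectedCost a b c W φ X Y) (-c) 0 := by
  have hφ := intervalIntegral.intervalIntegrable_of_integral_ne_zero (hφ1.trans_ne one_ne_zero)
  have hdiff : ∀ᵐ x, ∀ Y, HasDerivAt (fun Y => cost a b c X Y x)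
      (a * Y / √(b * (X - x) ^ 2 + Y ^ 2) - c) Y := by
    filter_upwards [Measure.ae_ne volume X] with x hx Y
    exact hasDerivAt_cost_snd (by have := sub_ne_zero.2 hx.symm; positivity)
  have := hasDerivAt_intervalIntegral_mul (s₀ := 0) hφ (fun Y => continuous_cost a b c X Y)
    (by simpa using continuous_const) (abs_deriv_cost_snd_le ha hb.le hc X) hdiff
  simpa [expectedCost, intervalIntegral.integral_const_mul, hφ1] using this

lemma mem_Ioo_of_integral_deriv_cost_fst_eq_zero (hW : 0 ≤ W) (hφ0 : ∀ x, 0 ≤ φ x)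
    (hφ1 : ∫ x in 0..W, φ x = 1) (ha : 0 < a) (hb : 0 < b) {X Y : ℝ} (hY : 0 < Y)
    (h : ∫ x in 0..W, a * (b * (X - x)) / √(b * (X - x) ^ 2 + Y ^ 2) * φ x = 0) :
    X ∈ Ioo 0 W := by
  have hsqrt : ∀ x, 0 < √(b * (X - x) ^ 2 + Y ^ 2) := fun x => sqrt_pos.2 (by positivity)
  constructor
  · by_contra! hX
    have := intervalIntegral_mul_pos hW hφ0 (hφ1 ▸ one_pos)
      (continuous_deriv_cost_fst hb.le hY X).neg fun x hx =>
        neg_pos.2 (div_neg_of_neg_of_pos (mul_neg_of_pos_of_neg ha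
          (mul_neg_of_pos_of_neg hb (by linarith [hx.1]))) (hsqrt x))
    simp only [Pi.neg_apply, neg_mul, intervalIntegral.integral_neg] at this
    linarith
  · by_contra! hX
    have := intervalIntegral_mul_pos hW hφ0 (hφ1 ▸ one_pos)
      (continuous_deriv_cost_fst hb.le hY X) fun x hx =>
        div_pos (mul_pos ha (mul_pos hb (by linarith [hx.2]))) (hsqrt x)
    linarith

end ExpectedCost

theorem stmt_6_general
    (W a b c : ℝ) (φ : ℝ → ℝ)
    (hW : 0 < W) (hφ0 : ∀ x, 0 ≤ φ x)
    (hφ1 : (∫ x in (0:ℝ)..W, φ x) = 1)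
    (hb : 0 < b) (hc : 0 < c) (hca : c < a)
    (Cexp : ℝ → ℝ → ℝ)
    (hCexp : ∀ X Y : ℝ, Cexp X Y =
      ∫ x in (0:ℝ)..W, (a * Real.sqrt (b * (X - x) ^ 2 + Y ^ 2) - c * Y) * φ x) :
    (∃ Xs Ys : ℝ, 0 ≤ Ys ∧ ∀ X Y : ℝ, 0 ≤ Y → Cexp Xs Ys ≤ Cexp X Y) ∧
    (∀ Xs Ys : ℝ, 0 ≤ Ys → (∀ X Y : ℝ, 0 ≤ Y → Cexp Xs Ys ≤ Cexp X Y) →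
      0 < Xs ∧ Xs < W ∧ 0 < Ys) := by
  obtain rfl : Cexp = expectedCost a b c W φ := funext₂ hCexp
  have ha : 0 < a := hc.trans hca
  refine ⟨?_, fun Xs Ys hYs hmin => ?_⟩
  · have hclosed : IsClosed {p : ℝ × ℝ | 0 ≤ p.2} := isClosed_Ici.preimage continuous_snd
    obtain ⟨p, hp, hpmin⟩ := exists_isMinOn_of_le_norm
      (continuous_expectedCost ha.le hb.le hc.le hW.le hφ0 hφ1) hclosed ⟨0, le_refl (0 : ℝ)⟩
      (mul_pos (sub_pos.2 hca) (lt_min one_pos (sqrt_pos.2 hb)))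
      fun p hp => expectedCost_ge hb.le hc.le hca.le hW.le hφ0 hφ1 hp
    exact ⟨p.1, p.2, hp, fun X Y hY => isMinOn_iff.1 hpmin (X, Y) hY⟩
  have hYs : 0 < Ys := by
    refine hYs.lt_of_ne' fun h0 => ?_
    subst h0
    obtain ⟨ε, hε, hlt⟩ := exists_lt_of_hasDerivAt_neg
      (hasDerivAt_expectedCost_snd_zero hφ1 ha.le hb hc.le Xs) (neg_neg_of_pos hc)
    exact (hmin Xs ε hε.le).not_gt hlt
  have hφ := intervalIntegral.intervalIntegrable_of_integral_ne_zero (hφ1.trans_ne one_ne_zero)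
  have hderiv := IsLocalMin.hasDerivAt_eq_zero (.of_forall fun X => hmin X Ys hYs.le)
    (hasDerivAt_expectedCost_fst (c := c) hφ ha.le hb.le hYs Xs)
  obtain ⟨hX0, hXW⟩ := mem_Ioo_of_integral_deriv_cost_fst_eq_zero hW.le hφ0 hφ1 ha hb hYs hderiv
  exact ⟨hX0, hXW, hYs⟩

/-- `C_exp` attains a global minimum over ℝ × [0,∞), and every global minimizer
`(X*,Y*)` satisfies `0 < X* < W` and `Y* > 0`. -/
theorem stmt_6
    (W M a b c : ℝ) (φ : ℝ → ℝ)
    (hW : 0 < W) (hM : 0 < M) (hφm : Measurable φ)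
    (hφ0 : ∀ x, 0 ≤ φ x) (hφM : ∀ x, φ x ≤ M)
    (hφs : ∀ x, x ∉ Set.Icc (0:ℝ) W → φ x = 0)
    (hφ1 : (∫ x in (0:ℝ)..W, φ x) = 1)
    (hb : 0 < b) (hc : 0 < c) (hca : c < a)
    (Cexp : ℝ → ℝ → ℝ)
    (hCexp : ∀ X Y : ℝ, Cexp X Y =
      ∫ x in (0:ℝ)..W, (a * Real.sqrt (b * (X - x) ^ 2 + Y ^ 2) - c * Y) * φ x) :
    (∃ Xs Ys : ℝ, 0 ≤ Ys ∧ ∀ X Y : ℝ, 0 ≤ Y → Cexp Xs Ys ≤ Cexp X Y) ∧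
    (∀ Xs Ys : ℝ, 0 ≤ Ys → (∀ X Y : ℝ, 0 ≤ Y → Cexp Xs Ys ≤ Cexp X Y) →
      0 < Xs ∧ Xs < W ∧ 0 < Ys) :=
  stmt_6_general W a b c φ hW hφ0 hφ1 hb hc hca Cexp hCexp
end

section
/- Define J(X,Y) := ∫₀^W ((X−x)² + Y²)/(2Y) · φ(x) dx for (X,Y) ∈ ℝ × (0,∞) (the expected intercept time when the target and the vehicle have equal speeds). Let X* := ∫₀^W x φ(x) dx and Y* := √(∫₀^W (X*−x)² φ(x) dx). Then Y* > 0 and (X*,Y*) is the unique global minimizer of J over ℝ × (0,∞). -/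
open Real MeasureTheory Filter

/-!
Expanding the square around the mean `X*` (the parallel-axis identity) gives
`∫ ((X − x)² + Y²) φ = (X − X*)² + Y*² + Y²`, and completing the square in `Y` turns this into
`J(X, Y) = Y* + ((X − X*)² + (Y − Y*)²) / (2Y)`, which exceeds `J(X*, Y*) = Y*` off `(X*, Y*)`.
The variance `Y*²` is positive because a probability density cannot be concentrated at a point.
-/

section Moments

variable {φ : ℝ → ℝ} {a b : ℝ}

theorem integral_sub_sq_mul (hφ : IntervalIntegrable φ volume a b) (c : ℝ) :
    ∫ x in a..b, (c - x) ^ 2 * φ x =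
      c ^ 2 * (∫ x in a..b, φ x) - 2 * c * (∫ x in a..b, x * φ x) + ∫ x in a..b, x ^ 2 * φ x := by
  have h₁ : IntervalIntegrable (fun x => x * φ x) volume a b := hφ.continuousOn_mul (by fun_prop)
  have h₂ : IntervalIntegrable (fun x => x ^ 2 * φ x) volume a b :=
    hφ.continuousOn_mul (by fun_prop)
  have hexpand : (fun x => (c - x) ^ 2 * φ x) =
      fun x => c ^ 2 * φ x - 2 * c * (x * φ x) + x ^ 2 * φ x := by
    funext x; ring
  rw [hexpand, intervalIntegral.integral_add ((hφ.const_mul _).sub (h₁.const_mul _)) h₂,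
    intervalIntegral.integral_sub (hφ.const_mul _) (h₁.const_mul _),
    intervalIntegral.integral_const_mul, intervalIntegral.integral_const_mul]

theorem integral_sub_sq_mul_eq_sq_add_variance (hφ1 : ∫ x in a..b, φ x = 1) (c : ℝ) :
    ∫ x in a..b, (c - x) ^ 2 * φ x =
      (c - ∫ x in a..b, x * φ x) ^ 2 + ∫ x in a..b, ((∫ y in a..b, y * φ y) - x) ^ 2 * φ x := by
  have hφ := intervalIntegral.intervalIntegrable_of_integral_ne_zero (hφ1 ▸ one_ne_zero)
  rw [integral_sub_sq_mul hφ, integral_sub_sq_mul hφ, hφ1]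
  ring

theorem integral_sub_sq_mul_pos (hφ0 : ∀ x, 0 ≤ φ x) (hφ1 : ∫ x in a..b, φ x = 1) (c : ℝ) :
    0 < ∫ x in a..b, (c - x) ^ 2 * φ x := by
  have hφ := intervalIntegral.intervalIntegrable_of_integral_ne_zero (hφ1 ▸ one_ne_zero)
  have hmass : 0 < ∫ x in a..b, φ x := hφ1 ▸ one_pos
  rw [intervalIntegral.integral_pos_iff_support_of_nonneg_ae' (ae_of_all _ hφ0) hφ] at hmass
  rw [intervalIntegral.integral_pos_iff_support_of_nonneg_ae'
    (ae_of_all _ fun x => mul_nonneg (sq_nonneg _) (hφ0 x)) (hφ.continuousOn_mul (by fun_prop))]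
  have hsupport : Function.support (fun x => (c - x) ^ 2 * φ x) ∩ Set.Ioc a b =
      (Function.support φ ∩ Set.Ioc a b) \ {c} := by
    ext x
    simp only [Function.support_mul, ne_eq, OfNat.ofNat_ne_zero, not_false_eq_true,
      Function.support_pow, Set.mem_inter_iff, Function.mem_support, sub_eq_zero, eq_comm (a := c),
      Set.mem_Ioc, Set.mem_sdiff, Set.mem_singleton_iff]
    tauto
  rw [hsupport, measure_sdiff_null Real.volume_singleton]
  exact hmass

theorem integral_intercept_time_mul (hφ1 : ∫ x in a..b, φ x = 1) (X Y : ℝ) :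
    ∫ x in a..b, ((X - x) ^ 2 + Y ^ 2) / (2 * Y) * φ x =
      ((∫ x in a..b, (X - x) ^ 2 * φ x) + Y ^ 2) / (2 * Y) := by
  have hφ := intervalIntegral.intervalIntegrable_of_integral_ne_zero (hφ1 ▸ one_ne_zero)
  have hsq : IntervalIntegrable (fun x => (X - x) ^ 2 * φ x) volume a b :=
    hφ.continuousOn_mul (by fun_prop)
  have hsplit : (fun x => ((X - x) ^ 2 + Y ^ 2) / (2 * Y) * φ x) =
      fun x => (2 * Y)⁻¹ * ((X - x) ^ 2 * φ x + Y ^ 2 * φ x) := by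
    funext x; ring
  rw [hsplit, intervalIntegral.integral_const_mul,
    intervalIntegral.integral_add hsq (hφ.const_mul _), intervalIntegral.integral_const_mul, hφ1]
  ring

theorem integral_intercept_time_mul_eq (hφ0 : ∀ x, 0 ≤ φ x) (hφ1 : ∫ x in a..b, φ x = 1)
    (X : ℝ) {Y : ℝ} (hY : Y ≠ 0) :
    ∫ x in a..b, ((X - x) ^ 2 + Y ^ 2) / (2 * Y) * φ x =
      √(∫ x in a..b, ((∫ y in a..b, y * φ y) - x) ^ 2 * φ x) +
        ((X - ∫ y in a..b, y * φ y) ^ 2 +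
          (Y - √(∫ x in a..b, ((∫ y in a..b, y * φ y) - x) ^ 2 * φ x)) ^ 2) / (2 * Y) := by
  rw [integral_intercept_time_mul hφ1, integral_sub_sq_mul_eq_sq_add_variance hφ1]
  set v := ∫ x in a..b, ((∫ y in a..b, y * φ y) - x) ^ 2 * φ x
  have hv : √v ^ 2 = v := sq_sqrt (integral_sub_sq_mul_pos hφ0 hφ1 _).le
  field_simp
  linear_combination -hv

end Moments

theorem stmt_11_general (W : ℝ) (φ : ℝ → ℝ)
    (hφ0 : ∀ x, 0 ≤ φ x)
    (hφ1 : (∫ x in (0:ℝ)..W, φ x) = 1)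
    (J : ℝ → ℝ → ℝ)
    (hJ : ∀ X Y : ℝ, J X Y = ∫ x in (0:ℝ)..W, ((X - x) ^ 2 + Y ^ 2) / (2 * Y) * φ x)
    (Xs Ys : ℝ)
    (hXs : Xs = ∫ x in (0:ℝ)..W, x * φ x)
    (hYs : Ys = Real.sqrt (∫ x in (0:ℝ)..W, (Xs - x) ^ 2 * φ x)) :
    0 < Ys ∧
    (∀ X Y : ℝ, 0 < Y → J Xs Ys ≤ J X Y) ∧
    (∀ X Y : ℝ, 0 < Y → (X, Y) ≠ (Xs, Ys) → J Xs Ys < J X Y) := by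
  have hYs_pos : 0 < Ys := hYs ▸ Real.sqrt_pos.2 (integral_sub_sq_mul_pos hφ0 hφ1 Xs)
  have hJ_eq : ∀ X Y, 0 < Y → J X Y = Ys + ((X - Xs) ^ 2 + (Y - Ys) ^ 2) / (2 * Y) := by
    intro X Y hY
    rw [hJ, integral_intercept_time_mul_eq hφ0 hφ1 X hY.ne', ← hXs, ← hYs]
  have hJ_min : J Xs Ys = Ys := by simp [hJ_eq Xs Ys hYs_pos]
  refine ⟨hYs_pos, fun X Y hY => ?_, fun X Y hY hne => ?_⟩
  · rw [hJ_min, hJ_eq X Y hY]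
    have : 0 ≤ ((X - Xs) ^ 2 + (Y - Ys) ^ 2) / (2 * Y) := by positivity
    linarith
  · rw [hJ_min, hJ_eq X Y hY]
    have hd : (X - Xs) ^ 2 + (Y - Ys) ^ 2 ≠ 0 := by
      rw [Ne, add_eq_zero_iff_of_nonneg (sq_nonneg _) (sq_nonneg _), sq_eq_zero_iff,
        sq_eq_zero_iff, sub_eq_zero, sub_eq_zero]
      exact fun h => hne (Prod.ext h.1 h.2)
    have : 0 < ((X - Xs) ^ 2 + (Y - Ys) ^ 2) / (2 * Y) :=
      div_pos (lt_of_le_of_ne (by positivity) hd.symm) (by positivity)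
    linarith

/-- When target and vehicle have equal speeds, the expected intercept time
`J(X,Y) = ∫₀^W ((X−x)² + Y²)/(2Y) φ(x) dx` is uniquely minimized over ℝ × (0,∞)
at the centroid `X* = ∫₀^W x φ(x) dx`, `Y* = √(∫₀^W (X*−x)² φ(x) dx)`. -/
theorem stmt_11 (W M : ℝ) (φ : ℝ → ℝ)
    (hW : 0 < W) (hM : 0 < M) (hφm : Measurable φ)
    (hφ0 : ∀ x, 0 ≤ φ x) (hφM : ∀ x, φ x ≤ M)
    (hφs : ∀ x, x ∉ Set.Icc (0:ℝ) W → φ x = 0)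
    (hφ1 : (∫ x in (0:ℝ)..W, φ x) = 1)
    (J : ℝ → ℝ → ℝ)
    (hJ : ∀ X Y : ℝ, J X Y = ∫ x in (0:ℝ)..W, ((X - x) ^ 2 + Y ^ 2) / (2 * Y) * φ x)
    (Xs Ys : ℝ)
    (hXs : Xs = ∫ x in (0:ℝ)..W, x * φ x)
    (hYs : Ys = Real.sqrt (∫ x in (0:ℝ)..W, (Xs - x) ^ 2 * φ x)) :
    0 < Ys ∧
    (∀ X Y : ℝ, 0 < Y → J Xs Ys ≤ J X Y) ∧
    (∀ X Y : ℝ, 0 < Y → (X, Y) ≠ (Xs, Ys) → J Xs Ys < J X Y) :=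
  stmt_11_general W φ hφ0 hφ1 J hJ Xs Ys hXs hYs
end

section
/- Let v ∈ (0,1), let p, e ∈ ℝ² with p ≠ e, and let U ∈ ℝ² satisfy ‖U − e‖ = v·‖U − p‖. For t ∈ [0, ‖U − p‖), define the intermediate positions p_t := p + (t/‖U−p‖)·(U − p) (pursuer moving straight toward U at unit speed) and e_t := e + (v·t/‖U−e‖)·(U − e) (evader moving straight toward U at speed v). Then: (i) ‖U − e_t‖ = v·‖U − p_t‖, so U lies on the new Apollonius circle; and (ii) for every w ∈ ℝ², if ‖w − e_t‖ ≤ v·‖w − p_t‖ then ‖w − e‖ ≤ v·‖w − p‖, i.e., the new Apollonius disk is contained in the original one. -/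
/-!
Both moves are the homothety with centre `U` and ratio `c = 1 - t / ‖U - p‖ ∈ (0, 1]` (the
evader's step ratio agrees because `‖U - e‖ = v ‖U - p‖`), which scales `‖U - e‖` and `‖U - p‖`
alike, so `U` stays on the circle. For fixed `w`, the quantity
`‖w - e_c‖² - v² ‖w - p_c‖²` is affine in `c`: the `c²` term is `c² (‖U - e‖² - v² ‖U - p‖²) = 0`.
Its value at `c = 0` is `(1 - v²) ‖w - U‖² ≥ 0`, so if it is `≤ 0` at some `c ∈ (0, 1]`, the
slope is `≤ 0` and it is `≤ 0` at `c = 1` as well.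
-/

open AffineMap

def apolloniusDisk {P : Type*} [PseudoMetricSpace P] (v : ℝ) (p e : P) : Set P :=
  {w | dist w e ≤ v * dist w p}

section InnerProductSpace

variable {E : Type*} [NormedAddCommGroup E] [InnerProductSpace ℝ E]

theorem homothety_one_sub_eq_add_smul (U x : E) (s : ℝ) :
    homothety U (1 - s) x = x + s • (U - x) := by
  rw [homothety_apply, vsub_eq_sub, vadd_eq_add, sub_smul, one_smul, smul_sub, smul_sub]
  abel

theorem dist_homothety_sq (w U x : E) (c : ℝ) :
    dist w (homothety U c x) ^ 2 =
      dist w U ^ 2 + 2 * c * inner ℝ (w - U) (U - x) + c ^ 2 * dist U x ^ 2 := by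
  have h : w - homothety U c x = (w - U) + c • (U - x) := by
    rw [homothety_apply, vsub_eq_sub, vadd_eq_add, smul_sub, smul_sub]
    abel
  rw [dist_eq_norm, h, norm_add_sq_real, real_inner_smul_right, norm_smul, mul_pow,
    Real.norm_eq_abs, sq_abs, dist_eq_norm, dist_eq_norm]
  ring

theorem dist_homothety_sq_sub_sq {v : ℝ} {U p e : E} (hU : dist U e = v * dist U p)
    (w : E) (c : ℝ) :
    dist w (homothety U c e) ^ 2 - v ^ 2 * dist w (homothety U c p) ^ 2 =
      (1 - v ^ 2) * dist w U ^ 2 +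
        2 * c * (inner ℝ (w - U) (U - e) - v ^ 2 * inner ℝ (w - U) (U - p)) := by
  rw [dist_homothety_sq, dist_homothety_sq, hU]
  ring

theorem apolloniusDisk_homothety_subset {v c : ℝ} (hv0 : 0 ≤ v) (hv1 : v ≤ 1)
    (hc0 : 0 < c) (hc1 : c ≤ 1) {U p e : E} (hU : dist U e = v * dist U p) :
    apolloniusDisk v (homothety U c p) (homothety U c e) ⊆ apolloniusDisk v p e := by
  intro w hw
  set A := (1 - v ^ 2) * dist w U ^ 2
  set B := inner ℝ (w - U) (U - e) - v ^ 2 * inner ℝ (w - U) (U - p)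
  have hA : 0 ≤ A := mul_nonneg (by nlinarith) (sq_nonneg _)
  have hc : A + 2 * c * B ≤ 0 := by
    rw [← dist_homothety_sq_sub_sq hU, sub_nonpos, ← mul_pow]
    exact pow_le_pow_left₀ dist_nonneg hw 2
  have hB : B ≤ 0 := by nlinarith
  have hOne : dist w e ^ 2 - v ^ 2 * dist w p ^ 2 = A + 2 * B := by
    simpa only [homothety_one, AffineMap.id_apply, mul_one] using dist_homothety_sq_sub_sq hU w 1
  have hsq : dist w e ^ 2 ≤ (v * dist w p) ^ 2 := by
    nlinarith [mul_nonpos_of_nonneg_of_nonpos (sub_nonneg.2 hc1) hB]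
  exact (sq_le_sq₀ dist_nonneg (by positivity)).1 hsq

end InnerProductSpace

theorem stmt_13_general (v : ℝ) (hv0 : 0 < v) (hv1 : v < 1)
    (p e U : EuclideanSpace ℝ (Fin 2))
    (hU : ‖U - e‖ = v * ‖U - p‖)
    (t : ℝ) (ht0 : 0 ≤ t) (ht1 : t < ‖U - p‖)
    (pt et : EuclideanSpace ℝ (Fin 2))
    (hpt : pt = p + (t / ‖U - p‖) • (U - p))
    (het : et = e + (v * t / ‖U - e‖) • (U - e)) :
    ‖U - et‖ = v * ‖U - pt‖ ∧
    ∀ w : EuclideanSpace ℝ (Fin 2), ‖w - et‖ ≤ v * ‖w - pt‖ → ‖w - e‖ ≤ v * ‖w - p‖ := by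
  have hUp : 0 < ‖U - p‖ := ht0.trans_lt ht1
  set c := 1 - t / ‖U - p‖
  have hc0 : 0 < c := sub_pos.2 ((div_lt_one hUp).2 ht1)
  have hc1 : c ≤ 1 := sub_le_self _ (div_nonneg ht0 hUp.le)
  have hpt' : pt = homothety U c p := by rw [hpt, homothety_one_sub_eq_add_smul]
  have het' : et = homothety U c e := by
    rw [het, homothety_one_sub_eq_add_smul, hU, mul_div_mul_left _ _ hv0.ne']
  simp only [← dist_eq_norm] at hU ⊢
  subst hpt' het'
  refine ⟨?_, fun w hw => apolloniusDisk_homothety_subset hv0.le hv1.le hc0 hc1 hU hw⟩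
  rw [dist_center_homothety, dist_center_homothety, hU]
  ring

/-- If the pursuer and the evader both travel straight toward a point `U` on the
Apollonius circle, then `U` lies on every new Apollonius circle obtained from
simultaneous intermediate positions, and the new Apollonius disk is contained in the
original one. -/
theorem stmt_13 (v : ℝ) (hv0 : 0 < v) (hv1 : v < 1)
    (p e U : EuclideanSpace ℝ (Fin 2)) (hne : p ≠ e)
    (hU : ‖U - e‖ = v * ‖U - p‖)
    (t : ℝ) (ht0 : 0 ≤ t) (ht1 : t < ‖U - p‖)
    (pt et : EuclideanSpace ℝ (Fin 2))
    (hpt : pt = p + (t / ‖U - p‖) • (U - p))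
    (het : et = e + (v * t / ‖U - e‖) • (U - e)) :
    ‖U - et‖ = v * ‖U - pt‖ ∧
    ∀ w : EuclideanSpace ℝ (Fin 2), ‖w - et‖ ≤ v * ‖w - pt‖ → ‖w - e‖ ≤ v * ‖w - p‖ :=
  stmt_13_general v hv0 hv1 p e U hU t ht0 ht1 pt et hpt het
end

section
/- Let v ∈ (0,1), let p = (X,Y) with Y > 0 and e = (x,0), and let S := {w ∈ ℝ² : ‖w − e‖ = v·‖w − p‖}. Then the supremum of the second coordinates of points of S equals H(X,Y,x) := (v·√((X−x)² + Y²) − v²·Y)/(1−v²), and it is attained at the point ((x − v²X)/(1−v²), H(X,Y,x)). That is, the topmost point of the Apollonius circle has height H(X,Y,x) above the X-axis. -/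
open Real MeasureTheory Filter

/-- A point of the plane `ℝ²`, given by its two coordinates. -/
noncomputable def pt (x y : ℝ) : EuclideanSpace ℝ (Fin 2) :=
  (WithLp.equiv 2 (Fin 2 → ℝ)).symm ![x, y]

/-- Distance between a point of the plane and a `pt`, in coordinates. -/
lemma norm_sub_pt' (w : EuclideanSpace ℝ (Fin 2)) (c d : ℝ) :
    ‖w - pt c d‖ = Real.sqrt ((w 0 - c)^2 + (w 1 - d)^2) := by
  rw [EuclideanSpace.norm_eq]
  simp [Fin.sum_univ_two, pt, Real.norm_eq_abs, sq_abs]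

/-- The topmost point of the Apollonius circle has height
`H(X,Y,x) = (v·√((X−x)² + Y²) − v²·Y)/(1−v²)` above the X-axis, attained at the point
`((x − v²X)/(1−v²), H(X,Y,x))`. -/
theorem stmt_14 (v X Y x : ℝ) (hv0 : 0 < v) (hv1 : v < 1) (hY : 0 < Y)
    (p e : EuclideanSpace ℝ (Fin 2))
    (hp : p = pt X Y) (he : e = pt x 0)
    (S : Set (EuclideanSpace ℝ (Fin 2)))
    (hS : S = {w : EuclideanSpace ℝ (Fin 2) | ‖w - e‖ = v * ‖w - p‖})
    (H : ℝ)
    (hH : H = (v * Real.sqrt ((X - x) ^ 2 + Y ^ 2) - v ^ 2 * Y) / (1 - v ^ 2)) :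
    IsGreatest ((fun w : EuclideanSpace ℝ (Fin 2) => w 1) '' S) H ∧
    pt ((x - v ^ 2 * X) / (1 - v ^ 2)) H ∈ S := by
  have hu : (0:ℝ) < 1 - v^2 := by nlinarith
  set d := Real.sqrt ((X - x) ^ 2 + Y ^ 2) with hd
  have hd0 : 0 ≤ d := Real.sqrt_nonneg _
  have hd2 : d^2 = (X - x)^2 + Y^2 := Real.sq_sqrt (by positivity)
  have hmem : pt ((x - v ^ 2 * X) / (1 - v ^ 2)) H ∈ S := by
    rw [hS, Set.mem_setOf_eq, he, hp, norm_sub_pt', norm_sub_pt']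
    have h0 : (pt ((x - v ^ 2 * X) / (1 - v ^ 2)) H) 0 = (x - v ^ 2 * X) / (1 - v ^ 2) := rfl
    have h1 : (pt ((x - v ^ 2 * X) / (1 - v ^ 2)) H) 1 = H := rfl
    rw [h0, h1]
    have hv2 : v * Real.sqrt (((x - v ^ 2 * X) / (1 - v ^ 2) - X)^2 + (H - Y)^2)
        = Real.sqrt (v^2 * (((x - v ^ 2 * X) / (1 - v ^ 2) - X)^2 + (H - Y)^2)) := by
      rw [Real.sqrt_mul (by positivity), Real.sqrt_sq hv0.le]
    rw [hv2]
    congr 1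
    rw [hH]
    field_simp
    linear_combination (v^2 - v^4) * hd2
  refine ⟨⟨⟨_, hmem, rfl⟩, ?_⟩, hmem⟩
  rintro h ⟨w, hw, rfl⟩
  rw [hS, Set.mem_setOf_eq, he, hp, norm_sub_pt', norm_sub_pt'] at hw
  set a := w 0
  set b := w 1
  have hB : (0:ℝ) ≤ (a - X)^2 + (b - Y)^2 := by positivity
  have hA : (a - x)^2 + b^2 = v^2 * ((a - X)^2 + (b - Y)^2) := by
    have := congrArg (·^2) hw
    simpa [sub_zero, mul_pow, Real.sq_sqrt (by positivity : (0:ℝ) ≤ (a - x)^2 + b^2),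
      Real.sq_sqrt hB] using this
  rw [hH, le_div_iff₀ hu]
  have hkey : ((1 - v^2)*b + v^2*Y)^2 ≤ (v*d)^2 := by
    nlinarith [sq_nonneg ((1 - v^2)*a - (x - v^2*X)), hd2]
  nlinarith [hkey, mul_nonneg hv0.le hd0]
end

section
/- Define the expected vertical height H_exp(X,Y) := ∫₀^W H(X,Y,x) φ(x) dx, where H(X,Y,x) := (v/(1−v²))·√((X−x)² + Y²) − (v²/(1−v²))·Y. Then H_exp attains a global minimum over ℝ × [0,∞) at a unique point (X*,Y*), and this point satisfies 0 < X* < W and Y* > 0. -/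
/-!
Write the pursuer's position as `z = X + Y i ∈ ℂ` and let `μ` be the probability measure with
density `φ`. Up to the factor `v / (1 - v²) > 0`, `H_exp` is `T z = ∫ |z - x| dμ(x) - v Im z`.
`T` is `1`-Lipschitz and grows like `(1 - v) |z|`, so it attains its minimum on the closed upper
half-plane. Since `μ` has no atoms, the mean distance has vertical derivative `0` on the real
axis, so there `T` decreases upwards at rate `v`: a minimizer has `Im z > 0`. At such a point the
horizontal derivative `∫ (Re z - x) / |z - x| dμ` vanishes, which is impossible unless
`0 < Re z < W`. Finally, for minimizers `p ≠ q` the triangle inequality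
`|p + q - 2x| ≤ |p - x| + |q - x|` is strict for all real `x` but at most one, so `T` would be
smaller at `(p + q) / 2`.
-/

open Real MeasureTheory Filter Set Topology Complex
open scoped InnerProductSpace

theorem HasDerivAt.norm_of_ne_zero {F : Type*} [NormedAddCommGroup F] [InnerProductSpace ℝ F]
    {f : ℝ → F} {f' : F} {t : ℝ} (hf : HasDerivAt f f' t) (h0 : f t ≠ 0) :
    HasDerivAt (‖f ·‖) (⟪f t, f'⟫_ℝ / ‖f t‖) t := by
  have h := hf.norm_sq.sqrt (by positivity)
  simp only [Real.sqrt_sq (norm_nonneg _)] at h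
  convert h using 1
  field_simp

theorem IsMinOn.hasLineDerivAt_nonneg {E : Type*} [NormedAddCommGroup E] [NormedSpace ℝ E]
    {f : E → ℝ} {s : Set E} {a b : E} {f' : ℝ} (h : IsMinOn f s a)
    (hf : HasLineDerivAt ℝ f f' a b) (hs : ∀ t : ℝ, 0 ≤ t → a + t • b ∈ s) : 0 ≤ f' := by
  have hmin : IsMinOn (fun t : ℝ => f (a + t • b)) (Ici 0) 0 := fun t ht => by
    simpa using h (hs t ht)
  have hcone : (1 : ℝ) ∈ posTangentConeAt (Ici 0) 0 :=
    mem_posTangentConeAt_of_segment_subset (by simp [segment_eq_Icc, Icc_subset_Ici_self])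
  simpa using hmin.localize.hasFDerivWithinAt_nonneg hf.hasDerivWithinAt.hasFDerivWithinAt hcone

theorem integral_pos_of_ae_pos {α : Type*} [MeasurableSpace α] {μ : Measure α} [NeZero μ]
    {f : α → ℝ} (hf : Integrable f μ) (h : ∀ᵐ x ∂μ, 0 < f x) : 0 < ∫ x, f x ∂μ := by
  rw [integral_pos_iff_support_of_nonneg_ae (h.mono fun _ hx => hx.le) hf, pos_iff_ne_zero]
  intro h0
  obtain ⟨x, hpos, hx⟩ := (h.and (measure_eq_zero_iff_ae_notMem.1 h0)).exists
  exact hx hpos.ne'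

theorem integrable_id_of_ae_mem_Icc {μ : Measure ℝ} [IsFiniteMeasure μ] {a b : ℝ}
    (h : ∀ᵐ x ∂μ, x ∈ Icc a b) : Integrable id μ :=
  .of_bound measurable_id.aestronglyMeasurable (max |a| |b|)
    (h.mono fun _ hx => abs_le_max_abs_abs hx.1 hx.2)

theorem isProbabilityMeasure_withDensity_ofReal {α : Type*} [MeasurableSpace α] {μ : Measure α}
    {f : α → ℝ} (hf : Integrable f μ) (hf0 : 0 ≤ᵐ[μ] f) (hf1 : ∫ x, f x ∂μ = 1) :
    IsProbabilityMeasure (μ.withDensity fun x => ENNReal.ofReal (f x)) :=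
  ⟨by rw [withDensity_apply _ MeasurableSet.univ, Measure.restrict_univ,
    ← ofReal_integral_eq_lintegral_ofReal hf hf0, hf1, ENNReal.ofReal_one]⟩

theorem integral_withDensity_ofReal_eq_integral_mul {α : Type*} [MeasurableSpace α]
    {μ : Measure α} {f : α → ℝ} (hf : AEMeasurable f μ) (hf0 : 0 ≤ᵐ[μ] f) (g : α → ℝ) :
    ∫ x, g x ∂μ.withDensity (fun x => ENNReal.ofReal (f x)) = ∫ x, g x * f x ∂μ := by
  rw [integral_withDensity_eq_integral_toReal_smul₀ hf.ennreal_ofReal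
    (ae_of_all _ fun _ => ENNReal.ofReal_lt_top)]
  refine integral_congr_ae (hf0.mono fun x hx => ?_)
  simp [ENNReal.toReal_ofReal hx, mul_comm]

theorem SameRay.re_mul_im_eq {a b : ℂ} (h : SameRay ℝ a b) : a.re * b.im = a.im * b.re := by
  rcases h with rfl | rfl | ⟨r₁, r₂, hr₁, -, h⟩
  · simp
  · simp
  · have hre : r₁ * a.re = r₂ * b.re := by simpa using congrArg re h
    have him : r₁ * a.im = r₂ * b.im := by simpa using congrArg im h
    refine mul_left_cancel₀ hr₁.ne' ?_
    linear_combination b.im * hre - b.re * him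

theorem Complex.subsingleton_setOf_sameRay_sub_ofReal {p q : ℂ} (hpq : p ≠ q) (hp : p.im ≠ 0) :
    {x : ℝ | SameRay ℝ (p - x) (q - x)}.Subsingleton := by
  intro x hx y hy
  have hx' := SameRay.re_mul_im_eq hx
  have hy' := SameRay.re_mul_im_eq hy
  simp only [sub_re, ofReal_re, sub_im, ofReal_im, sub_zero] at hx' hy'
  by_contra hxy
  have him : p.im = q.im := by
    refine mul_left_cancel₀ (sub_ne_zero.2 hxy) ?_
    linear_combination hx' - hy'
  have hre : p.re = q.re := by
    refine mul_left_cancel₀ hp ?_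
    linear_combination hx' + (p.re - x) * him
  exact hpq (Complex.ext hre him)

noncomputable def meanDist (μ : Measure ℝ) (z : ℂ) : ℝ := ∫ x, ‖z - x‖ ∂μ

section MeanDist

variable {μ : Measure ℝ}

theorem integrable_norm_sub_ofReal [IsFiniteMeasure μ] (hμ : Integrable id μ) (z : ℂ) :
    Integrable (fun x : ℝ => ‖z - x‖) μ :=
  ((integrable_const z).sub hμ.ofReal).norm

theorem meanDist_le_add_norm_sub [IsProbabilityMeasure μ] (hμ : Integrable id μ) (z w : ℂ) :
    meanDist μ z ≤ meanDist μ w + ‖z - w‖ := by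
  calc meanDist μ z ≤ ∫ x, (‖w - x‖ + ‖z - w‖) ∂μ :=
        integral_mono (integrable_norm_sub_ofReal hμ z)
          ((integrable_norm_sub_ofReal hμ w).add (integrable_const _))
          fun x => by linarith [norm_sub_le_norm_sub_add_norm_sub z w (x : ℂ)]
    _ = meanDist μ w + ‖z - w‖ := by
        rw [integral_add (integrable_norm_sub_ofReal hμ w) (integrable_const _)]
        simp [meanDist]

theorem lipschitzWith_meanDist [IsProbabilityMeasure μ] (hμ : Integrable id μ) :
    LipschitzWith 1 (meanDist μ) :=
  LipschitzWith.of_le_add fun z w => by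
    simpa [dist_eq_norm] using meanDist_le_add_norm_sub hμ z w

theorem norm_sub_integral_abs_le_meanDist [IsProbabilityMeasure μ] (hμ : Integrable id μ)
    (z : ℂ) : ‖z‖ - ∫ x, |x| ∂μ ≤ meanDist μ z := by
  have habs : Integrable (fun x : ℝ => |x|) μ := hμ.abs
  calc ‖z‖ - ∫ x, |x| ∂μ = ∫ x, (‖z‖ - |x|) ∂μ := by
        rw [integral_sub (integrable_const _) habs]; simp
    _ ≤ meanDist μ z :=
        integral_mono ((integrable_const _).sub habs) (integrable_norm_sub_ofReal hμ z)
          fun x => by simpa using norm_sub_norm_le z (x : ℂ)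

theorem hasLineDerivAt_meanDist [IsFiniteMeasure μ] (hμ : Integrable id μ) {z : ℂ}
    (hz : ∀ᵐ x : ℝ ∂μ, z ≠ x) (w : ℂ) :
    HasLineDerivAt ℝ (meanDist μ) (∫ x, ⟪z - x, w⟫_ℝ / ‖z - x‖ ∂μ) z w := by
  have hlip : ∀ x : ℝ, LipschitzWith (Real.nnabs ‖w‖) fun t : ℝ => ‖z + t • w - x‖ := by
    intro x
    refine LipschitzWith.of_dist_le_mul fun s t => ?_
    rw [Real.coe_nnabs, abs_norm, dist_eq_norm, Real.dist_eq]
    calc ‖‖z + s • w - x‖ - ‖z + t • w - x‖‖ ≤ ‖(z + s • w - x) - (z + t • w - x)‖ :=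
          abs_norm_sub_norm_le _ _
      _ = ‖w‖ * |s - t| := by
          rw [show z + s • w - x - (z + t • w - x) = (s - t) • w by module, norm_smul,
            Real.norm_eq_abs, mul_comm]
  have hderiv : ∀ x : ℝ, z ≠ x →
      HasDerivAt (fun t : ℝ => ‖z + t • w - x‖) (⟪z - x, w⟫_ℝ / ‖z - x‖) 0 := by
    intro x hx
    have h := (((hasDerivAt_id (0 : ℝ)).smul_const w).const_add z).sub_const (x : ℂ)
    simpa using h.norm_of_ne_zero (by simpa [sub_eq_zero] using hx)
  unfold HasLineDerivAt meanDist
  refine (hasDerivAt_integral_of_dominated_loc_of_lip (bound := fun _ => ‖w‖) univ_mem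
    (Eventually.of_forall fun t => ?_) (by simpa using integrable_norm_sub_ofReal hμ z)
    (by fun_prop : Measurable fun x : ℝ => ⟪z - x, w⟫_ℝ / ‖z - x‖).aestronglyMeasurable
    (ae_of_all _ fun x => (hlip x).lipschitzOnWith) (integrable_const _)
    (hz.mono hderiv)).2
  exact (by fun_prop : Continuous fun x : ℝ => ‖z + t • w - x‖).aestronglyMeasurable

theorem two_mul_meanDist_midpoint_lt [IsProbabilityMeasure μ] [NullSingletonClass μ]
    (hμ : Integrable id μ) {p q : ℂ} (hpq : p ≠ q) (hp : p.im ≠ 0) :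
    2 * meanDist μ ((p + q) / 2) < meanDist μ p + meanDist μ q := by
  have hstrict : ∀ᵐ x : ℝ ∂μ, 0 < ‖p - x‖ + ‖q - x‖ - 2 * ‖(p + q) / 2 - x‖ := by
    filter_upwards [measure_eq_zero_iff_ae_notMem.1
      ((subsingleton_setOf_sameRay_sub_ofReal hpq hp).measure_zero μ)] with x hx
    have hlt := norm_add_lt_of_not_sameRay hx
    rw [show p - x + (q - x) = 2 * ((p + q) / 2 - x) by ring, norm_mul, Complex.norm_two] at hlt
    linarith
  have hp' := integrable_norm_sub_ofReal hμ p
  have hq' := integrable_norm_sub_ofReal hμ q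
  have hm' := (integrable_norm_sub_ofReal hμ ((p + q) / 2)).const_mul 2
  have hint : 0 < ∫ x, (‖p - x‖ + ‖q - x‖ - 2 * ‖(p + q) / 2 - x‖) ∂μ :=
    integral_pos_of_ae_pos ((hp'.add hq').sub hm') hstrict
  rw [integral_sub (f := fun x : ℝ => ‖p - x‖ + ‖q - x‖) (hp'.add hq') hm',
    integral_add hp' hq', integral_const_mul] at hint
  unfold meanDist
  linarith

end MeanDist

noncomputable def tiltedMeanDist (μ : Measure ℝ) (v : ℝ) (z : ℂ) : ℝ := meanDist μ z - v * z.im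

section TiltedMeanDist

variable {μ : Measure ℝ} {v : ℝ}

theorem tendsto_tiltedMeanDist_cocompact [IsProbabilityMeasure μ] (hμ : Integrable id μ)
    (hv : |v| < 1) : Tendsto (tiltedMeanDist μ v) (cocompact ℂ) atTop := by
  have hlow : ∀ z, (1 - |v|) * ‖z‖ - ∫ x, |x| ∂μ ≤ tiltedMeanDist μ v z := fun z => by
    have h1 := norm_sub_integral_abs_le_meanDist hμ z
    have h2 : v * z.im ≤ |v| * ‖z‖ := (le_abs_self _).trans
      (by rw [abs_mul]; exact mul_le_mul_of_nonneg_left (abs_im_le_norm z) (abs_nonneg v))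
    unfold tiltedMeanDist
    linarith
  refine tendsto_atTop_mono hlow (tendsto_atTop_add_const_right _ _ ?_)
  exact tendsto_norm_cocompact_atTop.const_mul_atTop (sub_pos.2 hv)

theorem exists_isMinOn_tiltedMeanDist [IsProbabilityMeasure μ] (hμ : Integrable id μ)
    (hv : |v| < 1) :
    ∃ p ∈ {z : ℂ | 0 ≤ z.im}, IsMinOn (tiltedMeanDist μ v) {z : ℂ | 0 ≤ z.im} p := by
  have hcont : Continuous (tiltedMeanDist μ v) :=
    (lipschitzWith_meanDist hμ).continuous.sub (continuous_const.mul continuous_im)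
  refine hcont.continuousOn.exists_isMinOn' (isClosed_le continuous_const continuous_im)
    (show (0 : ℂ) ∈ {z : ℂ | 0 ≤ z.im} by simp) ?_
  exact ((tendsto_tiltedMeanDist_cocompact hμ hv).eventually_ge_atTop _).filter_mono inf_le_left

theorem hasLineDerivAt_tiltedMeanDist [IsFiniteMeasure μ] (hμ : Integrable id μ) {z : ℂ}
    (hz : ∀ᵐ x : ℝ ∂μ, z ≠ x) (w : ℂ) :
    HasLineDerivAt ℝ (tiltedMeanDist μ v) ((∫ x, ⟪z - x, w⟫_ℝ / ‖z - x‖ ∂μ) - v * w.im) z w := by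
  have him : HasLineDerivAt ℝ im w.im z w := imCLM.hasFDerivAt.hasLineDerivAt w
  exact (hasLineDerivAt_meanDist hμ hz w).sub (HasDerivAt.const_mul v him)

theorem im_pos_of_isMinOn_tiltedMeanDist [IsFiniteMeasure μ] [NullSingletonClass μ]
    (hμ : Integrable id μ) (hv : 0 < v) {p : ℂ} (hp : p ∈ {z : ℂ | 0 ≤ z.im})
    (hmin : IsMinOn (tiltedMeanDist μ v) {z : ℂ | 0 ≤ z.im} p) : 0 < p.im := by
  refine hp.lt_of_ne fun him => ?_
  have hne : ∀ᵐ x : ℝ ∂μ, p ≠ x := (μ.ae_ne p.re).mono fun x hx h => hx (by simp [h])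
  have hderiv : 0 ≤ -v := by
    simpa [← him] using hmin.hasLineDerivAt_nonneg (hasLineDerivAt_tiltedMeanDist hμ hne I)
      fun t ht => by simpa [← him] using ht
  linarith

theorem re_mem_Ioo_of_isMinOn_tiltedMeanDist [IsProbabilityMeasure μ] [NullSingletonClass μ]
    (hμ : Integrable id μ) {W : ℝ} (hsupp : ∀ᵐ x ∂μ, x ∈ Icc 0 W) {p : ℂ} (hp : 0 < p.im)
    (hmin : IsMinOn (tiltedMeanDist μ v) {z : ℂ | 0 ≤ z.im} p) : p.re ∈ Ioo 0 W := by
  have hne : ∀ x : ℝ, p ≠ x := fun x h => hp.ne' (by simp [h])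
  have hzero : ∫ x : ℝ, (p.re - x) / ‖p - x‖ ∂μ = 0 := by
    simpa using hmin.hasLineDerivAt_eq_zero (hasLineDerivAt_tiltedMeanDist hμ (ae_of_all _ hne) 1)
      (Eventually.of_forall fun t => by simpa using hp.le)
  have hdist : ∀ x : ℝ, 0 < ‖p - x‖ := fun x => norm_pos_iff.2 (sub_ne_zero.2 (hne x))
  have hint : Integrable (fun x : ℝ => (p.re - x) / ‖p - x‖) μ := by
    refine Integrable.of_bound (by fun_prop : Measurable _).aestronglyMeasurable 1
      (ae_of_all _ fun x => ?_)
    rw [norm_div, norm_norm, div_le_one (hdist x)]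
    simpa using abs_re_le_norm (p - x)
  constructor
  · by_contra! hle
    have hpos : 0 < ∫ x : ℝ, -((p.re - x) / ‖p - x‖) ∂μ := integral_pos_of_ae_pos hint.neg <| by
      filter_upwards [hsupp, μ.ae_ne 0] with x hx hx0
      exact neg_pos.2 (div_neg_of_neg_of_pos (by linarith [hx.1.lt_of_ne' hx0]) (hdist x))
    rw [integral_neg] at hpos
    linarith
  · by_contra! hle
    have hpos := integral_pos_of_ae_pos hint <| by
      filter_upwards [hsupp, μ.ae_ne W] with x hx hxW
      exact div_pos (by linarith [hx.2.lt_of_ne hxW]) (hdist x)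
    linarith

theorem eq_of_isMinOn_tiltedMeanDist [IsProbabilityMeasure μ] [NullSingletonClass μ]
    (hμ : Integrable id μ) {p q : ℂ} (hp : 0 < p.im) (hq : 0 ≤ q.im)
    (hpmin : IsMinOn (tiltedMeanDist μ v) {z : ℂ | 0 ≤ z.im} p)
    (hqmin : IsMinOn (tiltedMeanDist μ v) {z : ℂ | 0 ≤ z.im} q) : p = q := by
  by_contra hpq
  have hmid := two_mul_meanDist_midpoint_lt hμ hpq hp.ne'
  have hpm := hpmin (show (p + q) / 2 ∈ {z : ℂ | 0 ≤ z.im} by simp; linarith)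
  have hpq' := hpmin hq
  have hqp := hqmin hp.le
  simp only [mem_ofPred_eq, tiltedMeanDist, div_ofNat_im, add_im] at hpm hpq' hqp
  linarith

theorem integral_height_eq_mul_tiltedMeanDist [IsProbabilityMeasure μ] (hμ : Integrable id μ)
    (X Y : ℝ) :
    ∫ x, (v / (1 - v ^ 2) * √((X - x) ^ 2 + Y ^ 2) - v ^ 2 / (1 - v ^ 2) * Y) ∂μ
      = v / (1 - v ^ 2) * tiltedMeanDist μ v (X + Y * I) := by
  have hnorm : ∀ x : ℝ, √((X - x) ^ 2 + Y ^ 2) = ‖(X + Y * I : ℂ) - x‖ := fun x => by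
    rw [show (X + Y * I : ℂ) - x = ((X - x : ℝ) : ℂ) + Y * I by push_cast; ring, norm_add_mul_I]
  simp only [hnorm]
  rw [integral_sub ((integrable_norm_sub_ofReal hμ _).const_mul _) (integrable_const _),
    integral_const_mul, integral_const]
  simp only [probReal_univ, one_smul, tiltedMeanDist, meanDist, add_im, ofReal_im, mul_im,
    ofReal_re, I_im, mul_one, I_re, mul_zero, add_zero, zero_add]
  ring

end TiltedMeanDist

theorem forall_le_iff_isMinOn {H : ℝ → ℝ → ℝ} {T : ℂ → ℝ} {c : ℝ} (hc : 0 < c)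
    (hH : ∀ X Y, H X Y = c * T (X + Y * I)) (a b : ℝ) :
    (∀ X Y, 0 ≤ Y → H a b ≤ H X Y) ↔ IsMinOn T {z : ℂ | 0 ≤ z.im} (a + b * I) := by
  simp only [hH, mul_le_mul_iff_right₀ hc]
  refine ⟨fun h z hz => ?_, fun h X Y hY => h (by simpa using hY)⟩
  simpa using h z.re z.im hz

theorem stmt_15_general (W v : ℝ) (φ : ℝ → ℝ)
    (hW : 0 < W)
    (hφ0 : ∀ x, 0 ≤ φ x)
    (hφ1 : (∫ x in (0:ℝ)..W, φ x) = 1)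
    (hv0 : 0 < v) (hv1 : v < 1)
    (Hexp : ℝ → ℝ → ℝ)
    (hHexp : ∀ X Y : ℝ, Hexp X Y =
      ∫ x in (0:ℝ)..W,
        (v / (1 - v ^ 2) * Real.sqrt ((X - x) ^ 2 + Y ^ 2) - v ^ 2 / (1 - v ^ 2) * Y) * φ x) :
    ∃ Xs Ys : ℝ, 0 ≤ Ys ∧
      (∀ X Y : ℝ, 0 ≤ Y → Hexp Xs Ys ≤ Hexp X Y) ∧
      (∀ X' Y' : ℝ, 0 ≤ Y' → (∀ X Y : ℝ, 0 ≤ Y → Hexp X' Y' ≤ Hexp X Y) →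
        X' = Xs ∧ Y' = Ys) ∧
      0 < Xs ∧ Xs < W ∧ 0 < Ys := by
  have hφint : IntegrableOn φ (Ioc 0 W) := (intervalIntegrable_iff_integrableOn_Ioc_of_le hW.le).1
    (intervalIntegral.intervalIntegrable_of_integral_ne_zero (by simp [hφ1]))
  rw [intervalIntegral.integral_of_le hW.le] at hφ1
  set μ := (volume.restrict (Ioc 0 W)).withDensity fun x => ENNReal.ofReal (φ x)
  have : IsProbabilityMeasure μ :=
    isProbabilityMeasure_withDensity_ofReal hφint (ae_of_all _ hφ0) hφ1
  have hsupp : ∀ᵐ x ∂μ, x ∈ Icc 0 W := withDensity_absolutelyContinuous _ _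
    ((ae_restrict_mem measurableSet_Ioc).mono fun _ hx => Ioc_subset_Icc_self hx)
  have hμ := integrable_id_of_ae_mem_Icc hsupp
  have hc : 0 < v / (1 - v ^ 2) := div_pos hv0 (by nlinarith)
  have hH : ∀ X Y : ℝ, Hexp X Y = v / (1 - v ^ 2) * tiltedMeanDist μ v (X + Y * I) := by
    intro X Y
    rw [hHexp, intervalIntegral.integral_of_le hW.le,
      ← integral_withDensity_ofReal_eq_integral_mul hφint.aemeasurable (ae_of_all _ hφ0),
      integral_height_eq_mul_tiltedMeanDist hμ]
  obtain ⟨p, hp, hpmin⟩ := exists_isMinOn_tiltedMeanDist hμ (v := v) (by rwa [abs_of_pos hv0])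
  have hpim := im_pos_of_isMinOn_tiltedMeanDist hμ hv0 hp hpmin
  obtain ⟨hpre0, hpreW⟩ := re_mem_Ioo_of_isMinOn_tiltedMeanDist hμ hsupp hpim hpmin
  refine ⟨p.re, p.im, hp, (forall_le_iff_isMinOn hc hH _ _).2 (by rwa [re_add_im]), ?_,
    hpre0, hpreW, hpim⟩
  intro X Y hY hmin
  have hpq := eq_of_isMinOn_tiltedMeanDist hμ hpim (by simpa using hY)
    hpmin ((forall_le_iff_isMinOn hc hH _ _).1 hmin)
  constructor <;> simp [hpq]

/-- The expected vertical height `H_exp` attains a global minimum over ℝ × [0,∞) at a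
unique point `(X*,Y*)`, which satisfies `0 < X* < W` and `Y* > 0`. -/
theorem stmt_15 (W M v : ℝ) (φ : ℝ → ℝ)
    (hW : 0 < W) (hM : 0 < M) (hφm : Measurable φ)
    (hφ0 : ∀ x, 0 ≤ φ x) (hφM : ∀ x, φ x ≤ M)
    (hφs : ∀ x, x ∉ Set.Icc (0:ℝ) W → φ x = 0)
    (hφ1 : (∫ x in (0:ℝ)..W, φ x) = 1)
    (hv0 : 0 < v) (hv1 : v < 1)
    (Hexp : ℝ → ℝ → ℝ)
    (hHexp : ∀ X Y : ℝ, Hexp X Y =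
      ∫ x in (0:ℝ)..W,
        (v / (1 - v ^ 2) * Real.sqrt ((X - x) ^ 2 + Y ^ 2) - v ^ 2 / (1 - v ^ 2) * Y) * φ x) :
    ∃ Xs Ys : ℝ, 0 ≤ Ys ∧
      (∀ X Y : ℝ, 0 ≤ Y → Hexp Xs Ys ≤ Hexp X Y) ∧
      (∀ X' Y' : ℝ, 0 ≤ Y' → (∀ X Y : ℝ, 0 ≤ Y → Hexp X' Y' ≤ Hexp X Y) →
        X' = Xs ∧ Y' = Ys) ∧
      0 < Xs ∧ Xs < W ∧ 0 < Ys :=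
  stmt_15_general W v φ hW hφ0 hφ1 hv0 hv1 Hexp hHexp
end

section
/- Let v ∈ (0,1), let p = (X,Y) with Y ≥ 0 and e = (x,0) with p ≠ e, and let S := {w ∈ ℝ² : ‖w − e‖ = v·‖w − p‖}. Set O_x := (x − v²X)/(1−v²), O_y := −v²Y/(1−v²) and R := (v/(1−v²))·√((X−x)² + Y²). Then S intersects the X-axis (i.e., there exists w ∈ S with second coordinate 0), the intersection points are exactly (O_x ± √(R² − O_y²), 0), and the maximum of ‖w − e‖ over points w ∈ S with second coordinate 0 equals √(R² − O_y²) + |O_x − x|. -/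
/-!
Restricted to the X-axis, the Apollonius condition `|t - x| = v‖(t,0) - p‖` squares to a
quadratic equation in `t` whose leading coefficient is `1 - v² > 0`; completing the square
turns it into `(t - O_x)² = R² - O_y²`. Evaluating the quadratic at `t = x` gives a
non-positive value (the evader lies inside its Apollonius circle), so `R² - O_y² ≥ 0` and the
two roots `O_x ± √(R² - O_y²)` always exist. Their distances to `x` are
`|(O_x - x) ± √(R² - O_y²)|`, the larger of which is `√(R² - O_y²) + |O_x - x|`.
-/

open Real MeasureTheory Filter

lemma pt_apply_one (a b : ℝ) : pt a b 1 = b := by simp [pt]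

lemma eq_pt_of_apply_one_eq_zero {w : EuclideanSpace ℝ (Fin 2)} (h : w 1 = 0) :
    w = pt (w 0) 0 := by
  ext i
  fin_cases i <;> simp [pt, h]

lemma norm_pt_sub_pt (a b c d : ℝ) : ‖pt a b - pt c d‖ = √((a - c) ^ 2 + (b - d) ^ 2) := by
  simp [EuclideanSpace.norm_eq, pt, Fin.sum_univ_two, sq_abs]

lemma norm_pt_sub_pt_zero (t x : ℝ) : ‖pt t 0 - pt x 0‖ = |t - x| := by
  rw [norm_pt_sub_pt, sub_zero, zero_pow two_ne_zero, add_zero, sqrt_sq_eq_abs]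

lemma norm_pt_sub_eq_mul_norm_pt_sub_iff {v : ℝ} (hv : 0 ≤ v) (t x X Y : ℝ) :
    ‖pt t 0 - pt x 0‖ = v * ‖pt t 0 - pt X Y‖ ↔
      (t - x) ^ 2 = v ^ 2 * ((t - X) ^ 2 + Y ^ 2) := by
  rw [← sq_eq_sq₀ (norm_nonneg _) (by positivity), mul_pow, norm_pt_sub_pt_zero, sq_abs,
    norm_pt_sub_pt, sq_sqrt (by positivity), zero_sub, neg_sq]

section Apollonius

variable {v X Y x Ox Oy R : ℝ}

lemma apollonius_axis_quadratic (hv : v ^ 2 ≠ 1)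
    (hOx : Ox = (x - v ^ 2 * X) / (1 - v ^ 2)) (hOy : Oy = -(v ^ 2 * Y) / (1 - v ^ 2))
    (hR : R ^ 2 = (v / (1 - v ^ 2)) ^ 2 * ((X - x) ^ 2 + Y ^ 2)) (t : ℝ) :
    (t - x) ^ 2 - v ^ 2 * ((t - X) ^ 2 + Y ^ 2) =
      (1 - v ^ 2) * ((t - Ox) ^ 2 - (R ^ 2 - Oy ^ 2)) := by
  have : 1 - v ^ 2 ≠ 0 := sub_ne_zero.mpr hv.symm
  rw [hR, hOx, hOy]
  field_simp
  ring

lemma apollonius_discriminant_nonneg (hv : v ^ 2 < 1)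
    (hOx : Ox = (x - v ^ 2 * X) / (1 - v ^ 2)) (hOy : Oy = -(v ^ 2 * Y) / (1 - v ^ 2))
    (hR : R ^ 2 = (v / (1 - v ^ 2)) ^ 2 * ((X - x) ^ 2 + Y ^ 2)) :
    0 ≤ R ^ 2 - Oy ^ 2 := by
  have h := apollonius_axis_quadratic hv.ne hOx hOy hR x
  have : 0 ≤ v ^ 2 * ((x - X) ^ 2 + Y ^ 2) := by positivity
  nlinarith [sq_nonneg (x - Ox)]

lemma apollonius_axis_iff (hv : v ^ 2 < 1)
    (hOx : Ox = (x - v ^ 2 * X) / (1 - v ^ 2)) (hOy : Oy = -(v ^ 2 * Y) / (1 - v ^ 2))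
    (hR : R ^ 2 = (v / (1 - v ^ 2)) ^ 2 * ((X - x) ^ 2 + Y ^ 2)) (t : ℝ) :
    (t - x) ^ 2 = v ^ 2 * ((t - X) ^ 2 + Y ^ 2) ↔
      t = Ox + √(R ^ 2 - Oy ^ 2) ∨ t = Ox - √(R ^ 2 - Oy ^ 2) := by
  have hq := sq_sqrt (apollonius_discriminant_nonneg hv hOx hOy hR)
  set q := √(R ^ 2 - Oy ^ 2)
  rw [← sub_eq_zero, apollonius_axis_quadratic hv.ne hOx hOy hR, mul_eq_zero,
    or_iff_right (sub_ne_zero.mpr hv.ne'), sub_eq_zero, ← hq, sq_eq_sq_iff_eq_or_eq_neg,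
    sub_eq_iff_eq_add', sub_eq_iff_eq_add', ← sub_eq_add_neg]

end Apollonius

lemma max_abs_add_abs_sub {q : ℝ} (hq : 0 ≤ q) (a : ℝ) : max |a + q| |a - q| = q + |a| := by
  refine le_antisymm (max_le ?_ ?_) ?_
  · simpa [abs_of_nonneg hq, add_comm] using abs_add_le a q
  · simpa [abs_of_nonneg hq, add_comm] using abs_sub a q
  · rcases le_total 0 a with ha | ha
    · exact le_max_of_le_left (by rw [abs_of_nonneg ha, abs_of_nonneg (by linarith)]; linarith)
    · exact le_max_of_le_right (by rw [abs_of_nonpos ha, abs_of_nonpos (by linarith)]; linarith)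

theorem stmt_16_general (v X Y x : ℝ) (hv0 : 0 < v) (hv1 : v < 1)
    (p e : EuclideanSpace ℝ (Fin 2))
    (hp : p = pt X Y) (he : e = pt x 0)
    (Ox Oy R : ℝ)
    (hOx : Ox = (x - v ^ 2 * X) / (1 - v ^ 2))
    (hOy : Oy = -(v ^ 2 * Y) / (1 - v ^ 2))
    (hR : R = v / (1 - v ^ 2) * Real.sqrt ((X - x) ^ 2 + Y ^ 2)) :
    (∃ w : EuclideanSpace ℝ (Fin 2), ‖w - e‖ = v * ‖w - p‖ ∧ w 1 = 0) ∧
    (∀ w : EuclideanSpace ℝ (Fin 2),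
      (‖w - e‖ = v * ‖w - p‖ ∧ w 1 = 0) ↔
        (w = pt (Ox + Real.sqrt (R ^ 2 - Oy ^ 2)) 0 ∨
         w = pt (Ox - Real.sqrt (R ^ 2 - Oy ^ 2)) 0)) ∧
    IsGreatest {d : ℝ | ∃ w : EuclideanSpace ℝ (Fin 2),
        ‖w - e‖ = v * ‖w - p‖ ∧ w 1 = 0 ∧ d = ‖w - e‖}
      (Real.sqrt (R ^ 2 - Oy ^ 2) + |Ox - x|) := by
  subst hp he
  have hv : v ^ 2 < 1 := pow_lt_one₀ hv0.le hv1 two_ne_zero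
  have hR2 : R ^ 2 = (v / (1 - v ^ 2)) ^ 2 * ((X - x) ^ 2 + Y ^ 2) := by
    rw [hR, mul_pow, sq_sqrt (by positivity)]
  set q := √(R ^ 2 - Oy ^ 2)
  have on_axis_iff (t : ℝ) :
      ‖pt t 0 - pt x 0‖ = v * ‖pt t 0 - pt X Y‖ ↔ t = Ox + q ∨ t = Ox - q :=
    (norm_pt_sub_eq_mul_norm_pt_sub_iff hv0.le t x X Y).trans
      (apollonius_axis_iff hv hOx hOy hR2 t)
  have mem_iff (w : EuclideanSpace ℝ (Fin 2)) :
      (‖w - pt x 0‖ = v * ‖w - pt X Y‖ ∧ w 1 = 0) ↔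
        w = pt (Ox + q) 0 ∨ w = pt (Ox - q) 0 := by
    constructor
    · rintro ⟨hw, hw1⟩
      rw [eq_pt_of_apply_one_eq_zero hw1] at hw ⊢
      rcases (on_axis_iff _).mp hw with h | h <;> simp [h]
    · rintro (rfl | rfl) <;> exact ⟨(on_axis_iff _).mpr (by simp), pt_apply_one _ _⟩
  have distances : {d : ℝ | ∃ w : EuclideanSpace ℝ (Fin 2),
      ‖w - pt x 0‖ = v * ‖w - pt X Y‖ ∧ w 1 = 0 ∧ d = ‖w - pt x 0‖} =
      {|Ox - x + q|, |Ox - x - q|} := by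
    ext d
    simp only [Set.mem_ofPred_eq, ← and_assoc, mem_iff, or_and_right, exists_or, exists_eq_left,
      norm_pt_sub_pt_zero, Set.mem_insert_iff, Set.mem_singleton_iff, sub_right_comm _ q x,
      add_sub_right_comm _ q x]
  refine ⟨⟨_, (mem_iff _).mpr (Or.inl rfl)⟩, mem_iff, ?_⟩
  rw [distances, ← max_abs_add_abs_sub (sqrt_nonneg _)]
  exact isGreatest_pair

/-- The Apollonius circle intersects the X-axis, the intersection points are exactly
`(O_x ± √(R² − O_y²), 0)`, and the farthest such point from the evader `e = (x,0)` is
at distance `√(R² − O_y²) + |O_x − x|` from it. -/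
theorem stmt_16 (v X Y x : ℝ) (hv0 : 0 < v) (hv1 : v < 1) (hY : 0 ≤ Y)
    (p e : EuclideanSpace ℝ (Fin 2))
    (hp : p = pt X Y) (he : e = pt x 0) (hne : p ≠ e)
    (Ox Oy R : ℝ)
    (hOx : Ox = (x - v ^ 2 * X) / (1 - v ^ 2))
    (hOy : Oy = -(v ^ 2 * Y) / (1 - v ^ 2))
    (hR : R = v / (1 - v ^ 2) * Real.sqrt ((X - x) ^ 2 + Y ^ 2)) :
    (∃ w : EuclideanSpace ℝ (Fin 2), ‖w - e‖ = v * ‖w - p‖ ∧ w 1 = 0) ∧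
    (∀ w : EuclideanSpace ℝ (Fin 2),
      (‖w - e‖ = v * ‖w - p‖ ∧ w 1 = 0) ↔
        (w = pt (Ox + Real.sqrt (R ^ 2 - Oy ^ 2)) 0 ∨
         w = pt (Ox - Real.sqrt (R ^ 2 - Oy ^ 2)) 0)) ∧
    IsGreatest {d : ℝ | ∃ w : EuclideanSpace ℝ (Fin 2),
        ‖w - e‖ = v * ‖w - p‖ ∧ w 1 = 0 ∧ d = ‖w - e‖}
      (Real.sqrt (R ^ 2 - Oy ^ 2) + |Ox - x|) :=
  stmt_16_general v X Y x hv0 hv1 p e hp he Ox Oy R hOx hOy hR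
end

section
/- Let v ∈ (0,1) and let T(X,Y,x) := (√((1−v²)(X−x)² + Y²) − vY)/(1−v²). Let p_i = (X_i,Y_i) and p_j = (X_j,Y_j) be distinct points with Y_j ≥ Y_i ≥ 0. Then the set {x ∈ ℝ : T(X_i,Y_i,x) ≤ T(X_j,Y_j,x)} is convex (i.e., it is an interval, possibly empty or unbounded). In particular, the pairwise dominance region of the lower vehicle p_i with respect to p_j is the intersection of [0,W] with an interval. -/
/-!
Write `dᵢ(x) = √((1-v²)(Xᵢ-x)² + Yᵢ²)`. After clearing the denominator `1 - v² > 0`, the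
condition `T(pᵢ,x) ≤ T(pⱼ,x)` reads `dᵢ(x) + k ≤ dⱼ(x)` with `k = v(Yⱼ - Yᵢ) ≥ 0`. Both sides
are nonnegative, so it is equivalent to `2k·dᵢ(x) + k² ≤ dⱼ(x)² - dᵢ(x)²`, and the right-hand side
is affine in `x` because the quadratic terms cancel. As `dᵢ` is the Euclidean norm of an affine
function of `x`, it is convex, so the set is a sublevel set of a convex function.
-/

open Real

theorem ConvexOn.convex_add_le_of_concaveOn_sq_sub_sq {E : Type*} [AddCommGroup E] [Module ℝ E]
    {s : Set E} {f g : E → ℝ} {k : ℝ} (hf : ConvexOn ℝ s f) (hf₀ : ∀ x, 0 ≤ f x)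
    (hg₀ : ∀ x, 0 ≤ g x) (hk : 0 ≤ k) (hgf : ConcaveOn ℝ s fun x => g x ^ 2 - f x ^ 2) :
    Convex ℝ {x ∈ s | f x + k ≤ g x} := by
  have hconv : ConvexOn ℝ s fun x => (2 * k) • f x - (g x ^ 2 - f x ^ 2) :=
    (hf.smul (by positivity)).sub hgf
  convert hconv.convex_le (-k ^ 2) using 1
  ext x
  refine and_congr_right fun _ => ?_
  rw [← pow_le_pow_iff_left₀ (add_nonneg (hf₀ x) hk) (hg₀ x) two_ne_zero, smul_eq_mul]
  constructor <;> intro h <;> nlinarith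

theorem convexOn_sqrt_mul_sq_add_sq {a : ℝ} (ha : 0 ≤ a) (X Y : ℝ) :
    ConvexOn ℝ Set.univ fun x => √(a * (X - x) ^ 2 + Y ^ 2) := by
  let φ : ℝ →ᵃ[ℝ] EuclideanSpace ℝ (Fin 2) :=
    (LinearMap.toSpanSingleton ℝ _ !₂[√a, 0]).toAffineMap + AffineMap.const ℝ ℝ !₂[-(√a * X), Y]
  have hφ : (fun x => √(a * (X - x) ^ 2 + Y ^ 2)) = fun x => ‖φ x‖ := by
    funext x
    simp only [φ, EuclideanSpace.norm_eq, Fin.sum_univ_two, AffineMap.coe_add,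
      LinearMap.coe_toAffineMap, AffineMap.coe_const, Pi.add_apply,
      LinearMap.toSpanSingleton_apply, Function.const_apply, PiLp.add_apply, PiLp.smul_apply,
      Matrix.cons_val_zero, smul_eq_mul, norm_eq_abs, sq_abs, Matrix.cons_val_one,
      Matrix.cons_val_fin_one, mul_zero, zero_add]
    congr 1
    linear_combination (X - x) ^ 2 * (sq_sqrt ha).symm
  rw [hφ]
  exact (convexOn_norm convex_univ).comp_affineMap φ

theorem concaveOn_mul_add (α β : ℝ) : ConcaveOn ℝ Set.univ fun x : ℝ => α * x + β := by
  refine (((LinearMap.toSpanSingleton ℝ ℝ α).concaveOn convex_univ).add_const β).congr ?_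
  intro x _
  simp [mul_comm]

theorem stmt_19_general (v W : ℝ) (hv0 : 0 < v) (hv1 : v < 1)
    (T : ℝ → ℝ → ℝ → ℝ)
    (hT : ∀ X Y x : ℝ, T X Y x =
      (Real.sqrt ((1 - v ^ 2) * (X - x) ^ 2 + Y ^ 2) - v * Y) / (1 - v ^ 2))
    (Xi Yi Xj Yj : ℝ) (hYij : Yi ≤ Yj) :
    Convex ℝ {x : ℝ | T Xi Yi x ≤ T Xj Yj x} ∧
    Convex ℝ (Set.Icc (0:ℝ) W ∩ {x : ℝ | T Xi Yi x ≤ T Xj Yj x}) := by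
  set a := 1 - v ^ 2
  have ha : 0 < a := by nlinarith
  set d : ℝ → ℝ → ℝ → ℝ := fun X Y x => √(a * (X - x) ^ 2 + Y ^ 2)
  have hset : {x | T Xi Yi x ≤ T Xj Yj x} =
      {x ∈ Set.univ | d Xi Yi x + v * (Yj - Yi) ≤ d Xj Yj x} := by
    ext x
    simp only [hT, div_le_div_iff_of_pos_right ha, Set.mem_ofPred_eq, Set.mem_univ, true_and, d]
    constructor <;> intro h <;> linarith
  have hconv : Convex ℝ {x | T Xi Yi x ≤ T Xj Yj x} := by
    rw [hset]
    refine (convexOn_sqrt_mul_sq_add_sq ha.le Xi Yi).convex_add_le_of_concaveOn_sq_sub_sq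
      (fun _ => sqrt_nonneg _) (fun _ => sqrt_nonneg _) (by nlinarith) ?_
    refine (concaveOn_mul_add (2 * a * (Xi - Xj)) (a * (Xj ^ 2 - Xi ^ 2) + Yj ^ 2 - Yi ^ 2)).congr
      fun x _ => ?_
    simp only [d]
    rw [sq_sqrt (by positivity), sq_sqrt (by positivity)]
    ring
  exact ⟨hconv, (convex_Icc 0 W).inter hconv⟩

/-- For distinct vehicles with `Y_j ≥ Y_i ≥ 0`, the set
`{x : T(X_i,Y_i,x) ≤ T(X_j,Y_j,x)}` is convex; in particular, the pairwise dominance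
region of the lower vehicle is the intersection of `[0,W]` with an interval. -/
theorem stmt_19 (v W : ℝ) (hv0 : 0 < v) (hv1 : v < 1) (hW : 0 < W)
    (T : ℝ → ℝ → ℝ → ℝ)
    (hT : ∀ X Y x : ℝ, T X Y x =
      (Real.sqrt ((1 - v ^ 2) * (X - x) ^ 2 + Y ^ 2) - v * Y) / (1 - v ^ 2))
    (Xi Yi Xj Yj : ℝ) (hne : (Xi, Yi) ≠ (Xj, Yj)) (hYi : 0 ≤ Yi) (hYij : Yi ≤ Yj) :
    Convex ℝ {x : ℝ | T Xi Yi x ≤ T Xj Yj x} ∧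
    Convex ℝ (Set.Icc (0:ℝ) W ∩ {x : ℝ | T Xi Yi x ≤ T Xj Yj x}) :=
  stmt_19_general v W hv0 hv1 T hT Xi Yi Xj Yj hYij
end
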